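/- arXiv:math/0412385 — 4 statements merged into one kernel-verified Lean document; each statement's English description precedes it below -/
import Mathlib

section
/- Let G be a finite group, N ⊴ G, ψ ∈ Irr(N), and let L ⊴ G with L ≤ N. Then there exists a linear character of L lying under ψ if and only if the commutator subgroup [L,L] is contained in Ker(ψ^G). -/
open scoped BigOperators Pointwise Classical

noncomputable section

variable {G : Type}

/-- Extension by zero to `G` of a function defined on a subgroup `H` of `G`. -/
def extZero [Group G] (H : Subgroup G) (φ : H → ℂ) (g : G) : ℂ :=
  if h : g ∈ H then φ ⟨g, h⟩ else 0

/-- The character of `G` induced from the function `φ` on the subgroup `H`. -/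
def indChar [Group G] [Fintype G] (H : Subgroup G) (φ : H → ℂ) : G → ℂ :=
  fun g => (Nat.card H : ℂ)⁻¹ * ∑ x : G, extZero H φ (x * g * x⁻¹)

/-- The character of an intermediate subgroup `K` induced from `φ` on `H ≤ K`,
viewed as a function on `G` supported on `K`. -/
def indCharTo [Group G] [Fintype G] (K H : Subgroup G) (φ : H → ℂ) : G → ℂ :=
  fun g => (Nat.card H : ℂ)⁻¹ * ∑ x : G, if x ∈ K then extZero H φ (x * g * x⁻¹) else 0

/-- The kernel of a character: the set where it takes the value `f 1`. -/
def kerSet {X : Type*} [One X] (f : X → ℂ) : Set X := {x | f x = f 1}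

/-- The center of a character: the set where `|f x| = f 1`. -/
def centSet {X : Type*} [One X] (f : X → ℂ) : Set X :=
  {x | ((‖f x‖ : ℝ) : ℂ) = f 1}

/-- The central character associated with a character. -/
def zetaChar {X : Type*} [One X] (f : X → ℂ) : X → ℂ := fun x => f x / f 1

/-- `f` is a (nonzero) complex character of `X`. -/
def IsChar (X : Type) [Group X] (f : X → ℂ) : Prop :=
  (∃ V : FDRep ℂ X, FDRep.character V = f) ∧ f 1 ≠ 0

/-- `f` is an irreducible complex character of `X`. -/
def IsIrrChar (X : Type) [Group X] (f : X → ℂ) : Prop :=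
  ∃ V : FDRep ℂ X, CategoryTheory.Simple V ∧ FDRep.character V = f

/-- The inner product of two class functions on the subgroup `H` of `G`. -/
def innerSub [Group G] [Fintype G] (H : Subgroup G) (f φ : H → ℂ) : ℂ :=
  (Nat.card H : ℂ)⁻¹ * ∑ x : G, extZero H f x * (starRingEnd ℂ) (extZero H φ x)

/-- Restriction of a function on `K` to a smaller subgroup `L ≤ K`. -/
def resTo [Group G] {K : Subgroup G} (L : Subgroup G) (h : L ≤ K) (χ : K → ℂ) : L → ℂ :=
  fun x => χ ⟨x, h x.2⟩

/-- `lam : G → ℂ` is (the extension of) a linear character of the subgroup `L`. -/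
def IsLinOn [Group G] (L : Subgroup G) (lam : G → ℂ) : Prop :=
  lam 1 = 1 ∧ ∀ a ∈ L, ∀ b ∈ L, lam (a * b) = lam a * lam b

/-- The stabilizer in `G` of the character `φ` of the subgroup `H`. -/
def stabSet [Group G] (H : Subgroup G) (φ : H → ℂ) : Set G :=
  {g : G | (∀ x : G, x ∈ H ↔ g⁻¹ * x * g ∈ H) ∧
    ∀ x : G, extZero H φ (g⁻¹ * x * g) = extZero H φ x}

/-- The stabilizer in `G` of a linear character `lam` of a normal subgroup `L`,
as a subgroup of `G`. -/
def linStab [Group G] (L : Subgroup G) (hL : L.Normal) (lam : G → ℂ) : Subgroup G where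
  carrier := {g : G | ∀ x ∈ L, lam (g⁻¹ * x * g) = lam x}
  one_mem' := by intro x hx; simp
  mul_mem' := by
    intro a b ha hb x hx
    have h1 : a⁻¹ * x * a ∈ L := by simpa using hL.conj_mem x hx a⁻¹
    have key : (a * b)⁻¹ * x * (a * b) = b⁻¹ * (a⁻¹ * x * a) * b := by group
    rw [key, hb _ h1, ha _ hx]
  inv_mem' := by
    intro a ha x hx
    have h1 : a * x * a⁻¹ ∈ L := hL.conj_mem x hx a
    have h2 := ha _ h1
    rw [show a⁻¹ * (a * x * a⁻¹) * a = x from by group] at h2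
    rw [show a⁻¹⁻¹ * x * a⁻¹ = a * x * a⁻¹ from by group]
    exact h2.symm



theorem trace_aux {V : Type} [AddCommGroup V] [Module ℂ V] [FiniteDimensional ℂ V]
    (f : Module.End ℂ V) (n : ℕ) (hn : 0 < n) (hf : f ^ n = 1) :
    (LinearMap.trace ℂ V f).re ≤ (Module.finrank ℂ V : ℝ) ∧
      ((LinearMap.trace ℂ V f).re = (Module.finrank ℂ V : ℝ) →
        LinearMap.trace ℂ V f = (Module.finrank ℂ V : ℂ)) := by
  set d := Module.finrank ℂ V with hd
  obtain ⟨ζ, hζ⟩ : ∃ ζ : ℂ, IsPrimitiveRoot ζ n := ⟨_, Complex.isPrimitiveRoot_exp n hn.ne'⟩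
  have hζn : ζ ^ n = 1 := hζ.pow_eq_one
  have hζ0 : ζ ≠ 0 := fun h => by simp [h, zero_pow hn.ne'] at hζn
  have habs : ∀ j : ℕ, ‖ζ ^ j‖ = 1 := by
    intro j
    have h1 : ‖ζ‖ = 1 := Complex.norm_eq_one_of_pow_eq_one hζn hn.ne'
    rw [norm_pow]
    rw [h1, one_pow]
  set P : ℕ → Module.End ℂ V := fun j => ∑ k ∈ Finset.range n, ((ζ ^ j)⁻¹) ^ k • f ^ k with hP
  have hpowinv : ∀ j : ℕ, ((ζ ^ j)⁻¹) ^ n = 1 := by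
    intro j
    rw [inv_pow, ← pow_mul, mul_comm j n, pow_mul, hζn, one_pow, inv_one]
  have key : ∀ j, f * P j = ζ ^ j • P j := by
    intro j
    have hz : ζ ^ j * (ζ ^ j)⁻¹ = 1 := mul_inv_cancel₀ (pow_ne_zero _ hζ0)
    have c1 : ∀ k : ℕ, ζ ^ j * ((ζ ^ j)⁻¹) ^ (k + 1) = ((ζ ^ j)⁻¹) ^ k := by
      intro k
      rw [pow_succ, show ζ ^ j * ((ζ ^ j)⁻¹ ^ k * (ζ ^ j)⁻¹) =
        ζ ^ j * (ζ ^ j)⁻¹ * (ζ ^ j)⁻¹ ^ k from by ring, hz, one_mul]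
    have hsub : f * P j - ζ ^ j • P j = 0 := by
      have expand : f * P j - ζ ^ j • P j =
          ∑ k ∈ Finset.range n,
            ((ζ ^ j * ((ζ ^ j)⁻¹) ^ (k+1)) • f ^ (k+1) - (ζ ^ j * ((ζ ^ j)⁻¹) ^ k) • f ^ k) := by
        rw [hP, Finset.mul_sum, Finset.smul_sum, ← Finset.sum_sub_distrib]
        refine Finset.sum_congr rfl fun k _ => ?_
        congr 1
        · rw [c1, pow_succ' f, mul_smul_comm]
        · rw [smul_smul]
      rw [expand, Finset.sum_range_sub (fun k => (ζ ^ j * ((ζ ^ j)⁻¹) ^ k) • f ^ k), hf,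
        hpowinv]
      simp
    rw [← sub_eq_zero]; exact hsub
  have keypow : ∀ j m, f ^ m * P j = ((ζ ^ j) ^ m) • P j := by
    intro j m
    induction m with
    | zero => simp
    | succ m ih =>
      rw [pow_succ, pow_succ, mul_assoc, key, mul_smul_comm, ih, smul_smul, mul_comm (ζ ^ j)]
  have orth : ∀ j, P j * P j = (n : ℂ) • P j := by
    intro j
    have hz : (ζ ^ j)⁻¹ * ζ ^ j = 1 := inv_mul_cancel₀ (pow_ne_zero _ hζ0)
    calc P j * P j = ∑ k ∈ Finset.range n, ((ζ ^ j)⁻¹) ^ k • (f ^ k * P j) := by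
          rw [hP, Finset.sum_mul]
          exact Finset.sum_congr rfl fun k _ => smul_mul_assoc _ _ _
      _ = ∑ k ∈ Finset.range n, P j := by
          refine Finset.sum_congr rfl fun k _ => ?_
          rw [keypow, smul_smul, ← mul_pow, hz, one_pow, one_smul]
      _ = (n : ℂ) • P j := by
          rw [Finset.sum_const, Finset.card_range]
          simp [← Nat.cast_smul_eq_nsmul ℂ]
  have hsum : ∑ j ∈ Finset.range n, P j = (n : ℂ) • 1 := by
    rw [hP]
    rw [Finset.sum_comm]
    have hterm : ∀ k ∈ Finset.range n,
        (∑ j ∈ Finset.range n, ((ζ ^ j)⁻¹) ^ k • f ^ k) =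
          (if k = 0 then (n : ℂ) else 0) • f ^ k := by
      intro k hk
      rw [← Finset.sum_smul]
      congr 1
      have hswap : ∀ j : ℕ, ((ζ ^ j)⁻¹) ^ k = ((ζ ^ k)⁻¹) ^ j := by
        intro j
        rw [inv_pow, inv_pow, ← pow_mul, ← pow_mul, mul_comm j k]
      rw [Finset.sum_congr rfl fun j _ => hswap j]
      by_cases hk0 : k = 0
      · simp [hk0]
      · rw [if_neg hk0]
        have hne : (ζ ^ k)⁻¹ ≠ 1 := by
          rw [ne_eq, inv_eq_one]
          exact hζ.pow_ne_one_of_pos_of_lt hk0 (Finset.mem_range.mp hk)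
        have hgeom : ∑ j ∈ Finset.range n, ((ζ ^ k)⁻¹) ^ j = 0 := by
          have := geom_sum_eq hne n
          rw [this, inv_pow, ← pow_mul, mul_comm k n, pow_mul, hζn, one_pow, inv_one,
            sub_self, zero_div]
        exact hgeom
    rw [Finset.sum_congr rfl hterm]
    have : ∀ k ∈ Finset.range n, (if k = 0 then (n:ℂ) else 0) • f ^ k =
        if k = 0 then ((n:ℂ) • 1 : Module.End ℂ V) else 0 := by
      intro k hk
      by_cases hk0 : k = 0 <;> simp [hk0]
    rw [Finset.sum_congr rfl this, Finset.sum_ite_eq' (Finset.range n) 0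
      (fun _ => ((n : ℂ) • 1 : Module.End ℂ V)), if_pos (Finset.mem_range.mpr hn)]
  -- projections and ranks
  have hproj : ∀ j, ((n : ℂ)⁻¹ • P j) ∘ₗ ((n : ℂ)⁻¹ • P j) = (n : ℂ)⁻¹ • P j := by
    intro j
    have hne : (n : ℂ) ≠ 0 := Nat.cast_ne_zero.mpr hn.ne'
    have : ((n : ℂ)⁻¹ • P j) * ((n : ℂ)⁻¹ • P j) = (n : ℂ)⁻¹ • P j := by
      rw [smul_mul_assoc, mul_smul_comm, orth, smul_smul, smul_smul]
      congr 1
      field_simp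
    exact this
  have hprojex : ∀ j, ∃ q : Submodule ℂ V, LinearMap.IsProj q ((n : ℂ)⁻¹ • P j) := by
    intro j
    exact (LinearMap.isProj_iff_isIdempotentElem _).mpr (hproj j)
  choose q hq using hprojex
  set r : ℕ → ℕ := fun j => Module.finrank ℂ (q j) with hr
  have htrp : ∀ j, LinearMap.trace ℂ V ((n : ℂ)⁻¹ • P j) = (r j : ℂ) := fun j => (hq j).trace
  have htr1 : ∑ j ∈ Finset.range n, (r j : ℂ) = (d : ℂ) := by
    rw [← Finset.sum_congr rfl fun j _ => htrp j, ← map_sum, ← Finset.smul_sum, hsum,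
      smul_smul]
    have hne : (n : ℂ) ≠ 0 := Nat.cast_ne_zero.mpr hn.ne'
    rw [inv_mul_cancel₀ hne, one_smul, LinearMap.trace_one]
  have htrf : LinearMap.trace ℂ V f = ∑ j ∈ Finset.range n, ζ ^ j * (r j : ℂ) := by
    have hne : (n : ℂ) ≠ 0 := Nat.cast_ne_zero.mpr hn.ne'
    have hfeq : f = ∑ j ∈ Finset.range n, ζ ^ j • ((n : ℂ)⁻¹ • P j) := by
      have : f = f * ((n : ℂ)⁻¹ • ∑ j ∈ Finset.range n, P j) := by
        rw [hsum, smul_smul, inv_mul_cancel₀ hne, one_smul, mul_one]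
      rw [this, Finset.smul_sum, Finset.mul_sum]
      refine Finset.sum_congr rfl fun j _ => ?_
      rw [mul_smul_comm, key, smul_smul, smul_smul, mul_comm (ζ ^ j)]
    rw [hfeq, map_sum]
    refine Finset.sum_congr rfl fun j _ => ?_
    rw [LinearMap.map_smul, htrp, smul_eq_mul]
  -- real part argument
  have hrre : ∀ j : ℕ, ((ζ ^ j) * (r j : ℂ)).re = (ζ ^ j).re * (r j : ℝ) := by
    intro j; rw [Complex.mul_re]; simp
  have hrele : ∀ j : ℕ, (ζ ^ j).re ≤ 1 := fun j => (Complex.re_le_norm _).trans (le_of_eq (habs j))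
  have hsum_r : ∑ j ∈ Finset.range n, (r j : ℝ) = (d : ℝ) := by
    have h2 := congrArg Complex.re htr1
    rw [Complex.re_sum] at h2
    simpa using h2
  have hretr : (LinearMap.trace ℂ V f).re = ∑ j ∈ Finset.range n, (ζ ^ j).re * (r j : ℝ) := by
    rw [htrf, Complex.re_sum]
    exact Finset.sum_congr rfl fun j _ => hrre j
  constructor
  · rw [hretr]
    calc ∑ j ∈ Finset.range n, (ζ ^ j).re * (r j : ℝ)
        ≤ ∑ j ∈ Finset.range n, (r j : ℝ) := by
          refine Finset.sum_le_sum fun j _ => ?_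
          have := mul_le_mul_of_nonneg_right (hrele j) (Nat.cast_nonneg (r j) : (0:ℝ) ≤ r j)
          simpa using this
      _ = (d : ℝ) := hsum_r
  · intro heq
    have hzero : ∀ j ∈ Finset.range n, (1 - (ζ ^ j).re) * (r j : ℝ) = 0 := by
      have hs : ∑ j ∈ Finset.range n, (1 - (ζ ^ j).re) * (r j : ℝ) = 0 := by
        have : ∀ j ∈ Finset.range n, (1 - (ζ ^ j).re) * (r j : ℝ)
            = (r j : ℝ) - (ζ ^ j).re * (r j : ℝ) := fun j _ => by ring
        rw [Finset.sum_congr rfl this, Finset.sum_sub_distrib, hsum_r, ← hretr, heq, sub_self]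
      refine (Finset.sum_eq_zero_iff_of_nonneg fun j _ => ?_).mp hs
      exact mul_nonneg (by linarith [hrele j]) (Nat.cast_nonneg _)
    have hfix : ∀ j ∈ Finset.range n, (ζ ^ j) * (r j : ℂ) = (r j : ℂ) := by
      intro j hj
      rcases mul_eq_zero.mp (hzero j hj) with h | h
      · have hre1 : (ζ ^ j).re = 1 := by linarith
        have hnsq : Complex.normSq (ζ ^ j) = 1 := by
          rw [← Complex.sq_norm, habs]; norm_num
        have him : (ζ ^ j).im = 0 := by
          rw [Complex.normSq_apply, hre1] at hnsq
          have : (ζ ^ j).im * (ζ ^ j).im = 0 := by linarith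
          exact mul_self_eq_zero.mp this
        have hone : ζ ^ j = 1 := Complex.ext (by rw [hre1, Complex.one_re]) (by rw [him, Complex.one_im])
        rw [hone, one_mul]
      · have : r j = 0 := Nat.cast_eq_zero.mp h
        rw [this]; simp
    rw [htrf, Finset.sum_congr rfl hfix, htr1]


open CategoryTheory in
theorem invariant_top {X : Type} [Group X] (V : FDRep ℂ X) [Simple V] (U : Submodule ℂ V)
    (hU : ∀ g : X, ∀ u ∈ U, V.ρ g u ∈ U) (hne : U ≠ ⊥) : U = ⊤ := by
  let ρU : Representation ℂ X U :=
    { toFun := fun g => (V.ρ g).restrict (fun u hu => hU g u hu)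
      map_one' := by ext u; simp
      map_mul' := fun g h => by ext u; simp }
  let W : FDRep ℂ X := FDRep.of ρU
  let f : W ⟶ V := ⟨FGModuleCat.ofHom U.subtype, fun g => rfl⟩
  have hinj : Function.Injective ((forget (FDRep ℂ X)).map f) := by
    show Function.Injective U.subtype
    exact U.injective_subtype
  haveI : Mono f := ConcreteCategory.mono_of_injective f hinj
  obtain ⟨u, hu, hune⟩ := Submodule.exists_mem_ne_zero_of_ne_bot hne
  have hf0 : f ≠ 0 := by
    intro h
    have h2 : U.subtype ⟨u, hu⟩ = (0 : W ⟶ V).hom ⟨u, hu⟩ :=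
      congrFun (congrArg (fun (g : W ⟶ V) => (g.hom : W → V)) h) ⟨u, hu⟩
    simp only [Action.zero_hom] at h2
    exact hune (by simpa using (h2.trans rfl : U.subtype ⟨u, hu⟩ = 0))
  haveI : IsIso f := isIso_of_mono_of_nonzero hf0
  have hb : Function.Bijective ((forget (FDRep ℂ X)).map f) :=
    (isIso_iff_bijective _).mp (inferInstance : IsIso ((forget (FDRep ℂ X)).map f))
  rw [← Submodule.range_subtype U]
  exact LinearMap.range_eq_top.mpr hb.2

theorem sum_extZero {G : Type} [Group G] [Fintype G] (H : Subgroup G) (φ : ↥H → ℂ) :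
    ∑ x : G, extZero H φ x = ∑ h : ↥H, φ h := by
  classical
  rw [← Finset.sum_filter_add_sum_filter_not Finset.univ (fun x => x ∈ H) (extZero H φ)]
  have h2 : ∑ x ∈ Finset.univ.filter (fun x => ¬ x ∈ H), extZero H φ x = 0 := by
    refine Finset.sum_eq_zero fun x hx => ?_
    rw [Finset.mem_filter] at hx
    exact dif_neg hx.2
  rw [h2, add_zero]
  rw [Finset.sum_subtype (p := (fun x => x ∈ H)) (Finset.univ.filter (fun x => x ∈ H))
    (fun x => by simp) (extZero H φ)]
  refine Finset.sum_congr rfl fun h _ => ?_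
  simp [extZero]

theorem isLinOn_commutator {G : Type} [Group G] {L : Subgroup G} {lam : G → ℂ}
    (h : IsLinOn L lam) : ∀ x ∈ (⁅L, L⁆ : Subgroup G), lam x = 1 := by
  have hval : ∀ a : ↥L, lam ↑a * lam ↑(a⁻¹) = 1 := by
    intro a
    rw [← h.2 _ a.2 _ a⁻¹.2]
    simp [h.1]
  let μ : ↥L →* ℂˣ := by
    refine { toFun := fun a => ⟨lam ↑a, lam ↑(a⁻¹), hval a, by rw [mul_comm]; exact hval a⟩,
             map_one' := ?_, map_mul' := ?_ }
    · ext; exact h.1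
    · intro a b; ext; exact h.2 _ a.2 _ b.2
  intro x hx
  have hmap : Subgroup.map L.subtype ⁅(⊤ : Subgroup ↥L), ⊤⁆ = (⁅L, L⁆ : Subgroup G) := by
    rw [Subgroup.map_commutator, ← MonoidHom.range_eq_map, Subgroup.range_subtype]
  rw [← hmap] at hx
  obtain ⟨y, hy, hyx⟩ := hx
  have : μ y = 1 := Abelianization.commutator_subset_ker μ hy
  have hval1 : lam ↑y = 1 := congrArg Units.val this
  rw [← hyx]
  exact hval1

theorem finite_homUnits (Q : Type) [CommGroup Q] [Finite Q] : Finite (Q →* ℂˣ) := by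
  haveI : NeZero (Monoid.exponent Q) := ⟨Monoid.exponent_ne_zero_of_finite⟩
  obtain ⟨e⟩ := CommGroup.monoidHom_mulEquiv_of_hasEnoughRootsOfUnity Q ℂ
  exact Finite.of_equiv Q e.symm.toEquiv

theorem sum_hom_eq_zero {Q : Type} [CommGroup Q] [Finite Q] [Fintype (Q →* ℂˣ)]
    {x : Q} (hx : x ≠ 1) : ∑ φ : Q →* ℂˣ, ((φ x : ℂˣ) : ℂ) = 0 := by
  haveI : NeZero (Monoid.exponent Q) := ⟨Monoid.exponent_ne_zero_of_finite⟩
  obtain ⟨φ₀, hφ₀⟩ := CommGroup.exists_apply_ne_one_of_hasEnoughRootsOfUnity Q ℂ hx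
  have hmul : ∑ φ : Q →* ℂˣ, ((φ x : ℂˣ) : ℂ)
      = ((φ₀ x : ℂˣ) : ℂ) * ∑ φ : Q →* ℂˣ, ((φ x : ℂˣ) : ℂ) := by
    calc ∑ φ : Q →* ℂˣ, ((φ x : ℂˣ) : ℂ)
        = ∑ φ : Q →* ℂˣ, (((φ₀ * φ) x : ℂˣ) : ℂ) :=
          (Fintype.sum_equiv (Equiv.mulLeft φ₀) _ _ fun φ => rfl).symm
      _ = ((φ₀ x : ℂˣ) : ℂ) * ∑ φ : Q →* ℂˣ, ((φ x : ℂˣ) : ℂ) := by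
          rw [Finset.mul_sum]
          exact Finset.sum_congr rfl fun φ _ => by simp [Units.val_mul]
  have hne : ((φ₀ x : ℂˣ) : ℂ) ≠ 1 := fun hcon => hφ₀ (Units.ext hcon)
  have h3 : (((φ₀ x : ℂˣ) : ℂ) - 1) * ∑ φ : Q →* ℂˣ, ((φ x : ℂˣ) : ℂ) = 0 := by
    rw [sub_mul, one_mul, ← hmul, sub_self]
  rcases mul_eq_zero.mp h3 with h | h
  · exact absurd (sub_eq_zero.mp h) hne
  · exact h



theorem innerSub_eq {G : Type} [Group G] [Fintype G] (N L : Subgroup G) (hLN : L ≤ N)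
    (ψ : ↥N → ℂ) (g : ↥L → ℂ) :
    innerSub L (resTo L hLN ψ) g =
      (Nat.card ↥L : ℂ)⁻¹ *
        ∑ l : ↥L, ψ (Subgroup.inclusion hLN l) * (starRingEnd ℂ) (g l) := by
  unfold innerSub
  congr 1
  rw [← sum_extZero L (fun l => ψ (Subgroup.inclusion hLN l) * (starRingEnd ℂ) (g l))]
  refine Finset.sum_congr rfl fun x _ => ?_
  by_cases hx : x ∈ L
  · simp only [extZero, dif_pos hx]
    rfl
  · simp [extZero, dif_neg hx]

open commutatorElement in
theorem stmt_5 [Group G] [Fintype G] (N : Subgroup G) (hN : N.Normal) (ψ : ↥N → ℂ)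
    (hψ : IsIrrChar ↥N ψ) (L : Subgroup G) (hL : L.Normal) (hLN : L ≤ N) :
    (∃ lam : G → ℂ, IsLinOn L lam ∧
        innerSub L (resTo L hLN ψ) (fun x : ↥L => lam ↑x) ≠ 0) ↔
      (((⁅L, L⁆ : Subgroup G)) : Set G) ⊆ kerSet (indChar N ψ) := by
  classical
  haveI hLnorm := hL
  haveI hNnorm := hN
  obtain ⟨V, hsim, hchar⟩ := hψ
  haveI := hsim
  set d := Module.finrank ℂ V with hd
  have hψval : ∀ y : ↥N, ψ y = LinearMap.trace ℂ V (V.ρ y) := fun y => by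
    rw [← hchar]; rfl
  have hψ1 : ψ 1 = (d : ℂ) := by rw [← hchar]; exact FDRep.char_one V
  set D := (⁅L, L⁆ : Subgroup G) with hD
  haveI : D.Normal := Subgroup.commutator_normal L L
  have hDL : D ≤ L := Subgroup.commutator_le_left L L
  have hDN : D ≤ N := hDL.trans hLN
  set ι : ↥L →* ↥N := Subgroup.inclusion hLN with hι
  have hcardL : (Nat.card ↥L : ℂ) ≠ 0 := Nat.cast_ne_zero.mpr Nat.card_pos.ne'
  have hcardN : (Nat.card ↥N : ℂ) ≠ 0 := Nat.cast_ne_zero.mpr Nat.card_pos.ne'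
  set c : ℂ := (Nat.card ↥L : ℂ)⁻¹ with hc
  have hcne : c ≠ 0 := inv_ne_zero hcardL
  have hpow : ∀ y : ↥N, V.ρ y ^ Fintype.card ↥N = 1 := fun y => by
    rw [← map_pow, pow_card_eq_one, map_one]
  -- `indChar N ψ` is constant on `D` with value `indChar N ψ 1` if `ψ` is `d` on `D`.
  have hindconst : (∀ y : G, ∀ hyN : y ∈ N, y ∈ D → ψ ⟨y, hyN⟩ = (d : ℂ)) →
      ∀ x ∈ D, indChar N ψ x = indChar N ψ 1 := by
    intro hconst x hx
    unfold indChar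
    congr 1
    refine Finset.sum_congr rfl fun g _ => ?_
    have hg1 : g * 1 * g⁻¹ = 1 := by group
    have hgx : g * x * g⁻¹ ∈ D := Subgroup.Normal.conj_mem ‹D.Normal› x hx g
    rw [hg1]
    rw [show extZero N ψ (g * x * g⁻¹) = ψ ⟨g * x * g⁻¹, hDN hgx⟩ from dif_pos (hDN hgx)]
    rw [show extZero N ψ 1 = ψ 1 from dif_pos (one_mem N)]
    rw [hconst _ (hDN hgx) hgx, hψ1]
  constructor
  · -- forward direction
    rintro ⟨lam, hlin, hinner⟩
    have hlamD : ∀ y ∈ D, lam y = 1 := isLinOn_commutator hlin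
    set p : Module.End ℂ V :=
      c • ∑ l : ↥L, (starRingEnd ℂ) (lam ↑l) • V.ρ (ι l) with hp
    have htrp : LinearMap.trace ℂ V p =
        innerSub L (resTo L hLN ψ) (fun x : ↥L => lam ↑x) := by
      rw [innerSub_eq N L hLN ψ, hp, LinearMap.map_smul, map_sum, smul_eq_mul, hc]
      congr 1
      refine Finset.sum_congr rfl fun l _ => ?_
      rw [LinearMap.map_smul, smul_eq_mul, hψval (ι l), mul_comm]
    have hpne : p ≠ 0 := by
      intro h0
      rw [h0, map_zero] at htrp
      exact hinner htrp.symm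
    have hlaminv : ∀ l₀ : ↥L, lam ((↑l₀)⁻¹) * lam ↑l₀ = 1 := by
      intro l₀
      rw [← hlin.2 _ (inv_mem l₀.2) _ l₀.2, inv_mul_cancel]
      exact hlin.1
    have key : ∀ l₀ : ↥L, V.ρ (ι l₀) * p = (starRingEnd ℂ) (lam ((↑l₀)⁻¹)) • p := by
      intro l₀
      have step : ∀ l : ↥L, V.ρ (ι l₀) * ((starRingEnd ℂ) (lam ↑l) • V.ρ (ι l))
          = (starRingEnd ℂ) (lam ((↑l₀)⁻¹)) •
            ((starRingEnd ℂ) (lam ↑(l₀ * l)) • V.ρ (ι (l₀ * l))) := by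
        intro l
        have hco : (↑(l₀ * l) : G) = ↑l₀ * ↑l := rfl
        have hlam2 : lam ↑l = lam ((↑l₀)⁻¹) * lam ↑(l₀ * l) := by
          rw [hco, hlin.2 _ l₀.2 _ l.2, ← mul_assoc, hlaminv l₀, one_mul]
        have hρ : V.ρ (ι l₀) * V.ρ (ι l) = V.ρ (ι (l₀ * l)) := by
          rw [← map_mul, ← map_mul]
        rw [mul_smul_comm, hρ, smul_smul]
        congr 1
        rw [← map_mul, hlam2]
      have hshift : ∑ l : ↥L, (starRingEnd ℂ) (lam ↑(l₀ * l)) • V.ρ (ι (l₀ * l))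
          = ∑ l : ↥L, (starRingEnd ℂ) (lam ↑l) • V.ρ (ι l) :=
        Fintype.sum_bijective (fun l => l₀ * l) (Group.mulLeft_bijective l₀) _ _
          (fun l => rfl)
      calc V.ρ (ι l₀) * p
          = c • ∑ l : ↥L, V.ρ (ι l₀) * ((starRingEnd ℂ) (lam ↑l) • V.ρ (ι l)) := by
            rw [hp, mul_smul_comm, Finset.mul_sum]
        _ = c • ∑ l : ↥L, (starRingEnd ℂ) (lam ((↑l₀)⁻¹)) •
              ((starRingEnd ℂ) (lam ↑(l₀ * l)) • V.ρ (ι (l₀ * l))) := by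
            rw [Finset.sum_congr rfl fun l _ => step l]
        _ = c • ((starRingEnd ℂ) (lam ((↑l₀)⁻¹)) •
              ∑ l : ↥L, (starRingEnd ℂ) (lam ↑(l₀ * l)) • V.ρ (ι (l₀ * l))) := by
            rw [Finset.smul_sum (r := (starRingEnd ℂ) (lam ((↑l₀)⁻¹)))]
        _ = (starRingEnd ℂ) (lam ((↑l₀)⁻¹)) • p := by
            rw [hshift, smul_comm, ← hp]
    set W : Submodule ℂ V := LinearMap.range p with hW
    set U : Submodule ℂ V := ⨆ n : ↥N, W.map (V.ρ n) with hU
    have hUinv : ∀ g : ↥N, ∀ u ∈ U, V.ρ g u ∈ U := by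
      intro g u hu
      have hle : U.map (V.ρ g) ≤ U := by
        rw [hU, Submodule.map_iSup]
        refine iSup_le fun n => ?_
        rw [← Submodule.map_comp]
        have : V.ρ g ∘ₗ V.ρ n = V.ρ (g * n) := by rw [map_mul]; rfl
        rw [this]
        exact le_iSup (fun m : ↥N => W.map (V.ρ m)) (g * n)
      exact hle (Submodule.mem_map_of_mem hu)
    have hWU : W ≤ U := by
      have h1 : W.map (V.ρ 1) = W := by rw [map_one]; exact Submodule.map_id W
      rw [← h1]
      exact le_iSup (fun m : ↥N => W.map (V.ρ m)) 1
    have hUne : U ≠ ⊥ := by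
      intro h0
      apply hpne
      have hWbot : W = ⊥ := le_bot_iff.mp (h0 ▸ hWU)
      ext v
      have : p v ∈ W := LinearMap.mem_range_self p v
      rw [hWbot] at this
      simpa using this
    have hUtop : U = ⊤ := invariant_top V U hUinv hUne
    have htriv : ∀ y : G, ∀ hyN : y ∈ N, y ∈ D → V.ρ ⟨y, hyN⟩ = 1 := by
      intro y hyN hyD
      have hker : U ≤ LinearMap.ker (V.ρ ⟨y, hyN⟩ - (1 : Module.End ℂ V)) := by
        refine iSup_le fun n => ?_
        rintro v hv
        obtain ⟨w, hw, rfl⟩ := hv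
        obtain ⟨u, rfl⟩ := hw
        have hmemD : (↑n)⁻¹ * y * ↑n ∈ D := by
          have := Subgroup.Normal.conj_mem ‹D.Normal› y hyD (↑n)⁻¹
          simpa using this
        have hmemL : (↑n)⁻¹ * y * ↑n ∈ L := hDL hmemD
        set l' : ↥L := ⟨(↑n)⁻¹ * y * ↑n, hmemL⟩ with hl'
        have hdecomp : (⟨y, hyN⟩ : ↥N) * n = n * ι l' := by
          apply Subtype.ext
          show y * ↑n = ↑n * ((↑n)⁻¹ * y * ↑n)
          group
        have hcalc : V.ρ ⟨y, hyN⟩ (V.ρ n (p u)) = V.ρ n (p u) := by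
          have h2 : V.ρ ⟨y, hyN⟩ * V.ρ n = V.ρ n * V.ρ (ι l') := by
            rw [← map_mul, ← map_mul, hdecomp]
          have h3 : (V.ρ (ι l') * p) u = p u := by
            rw [key l']
            have : lam ((↑l' : G)⁻¹) = 1 := hlamD _ (inv_mem hmemD)
            rw [this, map_one, one_smul]
          calc V.ρ ⟨y, hyN⟩ (V.ρ n (p u)) = (V.ρ ⟨y, hyN⟩ * V.ρ n) (p u) := rfl
            _ = (V.ρ n * V.ρ (ι l')) (p u) := by rw [h2]
            _ = V.ρ n ((V.ρ (ι l') * p) u) := rfl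
            _ = V.ρ n (p u) := by rw [h3]
        rw [LinearMap.mem_ker, LinearMap.sub_apply, Module.End.one_apply, sub_eq_zero]
        exact hcalc
      rw [hUtop, top_le_iff] at hker
      have := LinearMap.ker_eq_top.mp hker
      exact sub_eq_zero.mp this
    intro x hx
    refine hindconst (fun y hyN hyD => ?_) x hx
    rw [hψval, htriv y hyN hyD, LinearMap.trace_one]
  · -- backward direction
    intro h
    have hconst : ∀ y : G, ∀ hyN : y ∈ N, y ∈ D → ψ ⟨y, hyN⟩ = (d : ℂ) := by
      intro y hyN hyD
      have heq : indChar N ψ y = indChar N ψ 1 := h hyD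
      have hmem : ∀ g : G, g * y * g⁻¹ ∈ N := fun g =>
        hDN (Subgroup.Normal.conj_mem ‹D.Normal› y hyD g)
      set F : G → ℂ := fun g => ψ ⟨g * y * g⁻¹, hmem g⟩ with hF
      have hL1 : indChar N ψ y = (Nat.card ↥N : ℂ)⁻¹ * ∑ g : G, F g := by
        unfold indChar
        congr 1
        exact Finset.sum_congr rfl fun g _ => dif_pos (hmem g)
      have hR1 : indChar N ψ 1 = (Nat.card ↥N : ℂ)⁻¹ * (Fintype.card G * (d : ℂ)) := by
        unfold indChar
        congr 1
        have : ∀ g : G, extZero N ψ (g * 1 * g⁻¹) = (d : ℂ) := by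
          intro g
          have hg1 : g * 1 * g⁻¹ = 1 := by group
          rw [hg1, show extZero N ψ 1 = ψ 1 from dif_pos (one_mem N), hψ1]
        rw [Finset.sum_congr rfl fun g _ => this g, Finset.sum_const, Finset.card_univ,
          nsmul_eq_mul]
      have hsumF : ∑ g : G, F g = (Fintype.card G : ℂ) * (d : ℂ) := by
        have := heq
        rw [hL1, hR1] at this
        exact mul_left_cancel₀ (inv_ne_zero hcardN) this
      have hbound : ∀ g : G, (F g).re ≤ (d : ℝ) := by
        intro g
        rw [hF]
        show (ψ ⟨g * y * g⁻¹, hmem g⟩).re ≤ (d : ℝ)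
        rw [hψval]
        exact (trace_aux (V.ρ ⟨g * y * g⁻¹, hmem g⟩) (Fintype.card ↥N) Fintype.card_pos
          (hpow _)).1
      have hre : ∑ g : G, (F g).re = (Fintype.card G : ℝ) * (d : ℝ) := by
        have h2 := congrArg Complex.re hsumF
        rw [Complex.re_sum] at h2
        rw [h2]
        simp [Complex.mul_re]
      have hzero : ∀ g ∈ (Finset.univ : Finset G), (d : ℝ) - (F g).re = 0 := by
        refine (Finset.sum_eq_zero_iff_of_nonneg fun g _ => by linarith [hbound g]).mp ?_
        rw [Finset.sum_sub_distrib, hre, Finset.sum_const, Finset.card_univ, nsmul_eq_mul,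
          sub_self]
      have h1 : (F 1).re = (d : ℝ) := by
        have := hzero 1 (Finset.mem_univ 1)
        linarith
      have hFy : F 1 = ψ ⟨y, hyN⟩ := by
        show ψ ⟨1 * y * 1⁻¹, hmem 1⟩ = ψ ⟨y, hyN⟩
        congr 1
        apply Subtype.ext
        show 1 * y * 1⁻¹ = y
        group
      have h1' : (ψ ⟨1 * y * 1⁻¹, hmem 1⟩).re = (d : ℝ) := h1
      rw [hψval] at h1'
      have h2 : ψ ⟨1 * y * 1⁻¹, hmem 1⟩ = (d : ℂ) := by
        rw [hψval]
        exact (trace_aux (V.ρ ⟨1 * y * 1⁻¹, hmem 1⟩) (Fintype.card ↥N) Fintype.card_pos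
          (hpow _)).2 h1'
      rw [← hFy]
      exact h2
    -- construct the linear character
    have hd0 : (d : ℂ) ≠ 0 := by
      have hdnz : d ≠ 0 := by
        intro h0
        have hss : Subsingleton V := Module.finrank_zero_iff.mp h0
        refine CategoryTheory.id_nonzero V ?_
        refine Action.hom_ext _ _ ?_
        apply FGModuleCat.hom_ext
        apply LinearMap.ext
        intro v
        exact hss.allEq _ _
      exact Nat.cast_ne_zero.mpr hdnz
    set D' : Subgroup ↥L := D.subgroupOf L with hD'
    haveI : D'.Normal := Subgroup.Normal.subgroupOf ‹D.Normal› L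
    have hcomm : ∀ a b : ↥L ⧸ D', a * b = b * a := by
      intro a b
      obtain ⟨a, rfl⟩ := QuotientGroup.mk_surjective a
      obtain ⟨b, rfl⟩ := QuotientGroup.mk_surjective b
      show ((a * b : ↥L) : ↥L ⧸ D') = ((b * a : ↥L) : ↥L ⧸ D')
      rw [QuotientGroup.eq]
      have : ((a * b)⁻¹ * (b * a) : ↥L) = ⁅b⁻¹, a⁻¹⁆ := by
        rw [commutatorElement_def]
        group
      rw [this, Subgroup.mem_subgroupOf]
      show ((⁅b⁻¹, a⁻¹⁆ : ↥L) : G) ∈ D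
      have hco : ((⁅b⁻¹, a⁻¹⁆ : ↥L) : G) = ⁅((b⁻¹ : ↥L) : G), ((a⁻¹ : ↥L) : G)⁆ := rfl
      rw [hco, hD]
      exact Subgroup.commutator_mem_commutator (b⁻¹).2 (a⁻¹).2
    letI : CommGroup (↥L ⧸ D') := { (inferInstance : Group (↥L ⧸ D')) with mul_comm := hcomm }
    haveI : Finite (↥L ⧸ D' →* ℂˣ) := finite_homUnits _
    haveI : Fintype (↥L ⧸ D' →* ℂˣ) := Fintype.ofFinite _
    set π : ↥L →* ↥L ⧸ D' := QuotientGroup.mk' D' with hπ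
    set T := Fintype.card (↥L ⧸ D' →* ℂˣ) with hT
    have hsum1 : ∀ l : ↥L, ∑ φ : ↥L ⧸ D' →* ℂˣ, ((φ (π l) : ℂˣ) : ℂ)
        = if (↑l : G) ∈ D then (T : ℂ) else 0 := by
      intro l
      by_cases hl : (↑l : G) ∈ D
      · have hl1 : π l = 1 := by
          rw [hπ]
          show QuotientGroup.mk l = 1
          rw [QuotientGroup.eq_one_iff]
          exact Subgroup.mem_subgroupOf.mpr hl
        rw [if_pos hl, hl1]
        rw [Finset.sum_congr rfl fun φ _ => by rw [map_one, Units.val_one]]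
        rw [Finset.sum_const, Finset.card_univ, nsmul_eq_mul, mul_one, hT]
      · have hne : π l ≠ 1 := by
          rw [hπ]
          show ¬ (QuotientGroup.mk l = 1)
          rw [QuotientGroup.eq_one_iff]
          exact fun hc => hl (Subgroup.mem_subgroupOf.mp hc)
        rw [if_neg hl]
        exact sum_hom_eq_zero hne
    have hTne : (T : ℂ) ≠ 0 := by
      have hTpos : 0 < T := Fintype.card_pos_iff.mpr ⟨1⟩
      exact Nat.cast_ne_zero.mpr hTpos.ne'
    have htot : ∑ φ : ↥L ⧸ D' →* ℂˣ,
        innerSub L (resTo L hLN ψ) (fun x : ↥L => ((φ (π x) : ℂˣ) : ℂ)) ≠ 0 := by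
      have hEach : ∀ φ : ↥L ⧸ D' →* ℂˣ,
          innerSub L (resTo L hLN ψ) (fun x : ↥L => ((φ (π x) : ℂˣ) : ℂ))
            = c * ∑ l : ↥L, ψ (ι l) * (starRingEnd ℂ) ((φ (π l) : ℂˣ) : ℂ) := fun φ =>
        innerSub_eq N L hLN ψ _
      rw [Finset.sum_congr rfl fun φ _ => hEach φ, ← Finset.mul_sum, Finset.sum_comm]
      have hinner2 : ∀ l : ↥L,
          ∑ φ : ↥L ⧸ D' →* ℂˣ, ψ (ι l) * (starRingEnd ℂ) ((φ (π l) : ℂˣ) : ℂ)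
          = if (↑l : G) ∈ D then (T : ℂ) * (d : ℂ) else 0 := by
        intro l
        rw [← Finset.mul_sum, ← map_sum, hsum1 l]
        by_cases hl : (↑l : G) ∈ D
        · rw [if_pos hl, if_pos hl]
          have hconj : (starRingEnd ℂ) ((T : ℂ)) = ((T : ℂ)) := Complex.conj_natCast T
          rw [hconj]
          have hval : ψ (ι l) = (d : ℂ) := hconst ↑l (hLN l.2) hl
          rw [hval, mul_comm]
        · rw [if_neg hl, if_neg hl, map_zero, mul_zero]
      rw [Finset.sum_congr rfl fun l _ => hinner2 l]
      rw [Finset.sum_ite, Finset.sum_const_zero, add_zero, Finset.sum_const, nsmul_eq_mul]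
      have hfilne : (Finset.univ.filter (fun l : ↥L => (↑l : G) ∈ D)).card ≠ 0 := by
        have : (1 : ↥L) ∈ Finset.univ.filter (fun l : ↥L => (↑l : G) ∈ D) :=
          Finset.mem_filter.mpr ⟨Finset.mem_univ 1, one_mem D⟩
        exact (Finset.card_pos.mpr ⟨1, this⟩).ne'
      exact mul_ne_zero hcne
        (mul_ne_zero (Nat.cast_ne_zero.mpr hfilne) (mul_ne_zero hTne hd0))
    obtain ⟨φ, -, hφ⟩ := Finset.exists_ne_zero_of_sum_ne_zero htot
    refine ⟨fun g => if hg : g ∈ L then ((φ (π ⟨g, hg⟩) : ℂˣ) : ℂ) else 1, ⟨?_, ?_⟩, ?_⟩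
    · show (if hg : (1:G) ∈ L then ((φ (π ⟨(1:G), hg⟩) : ℂˣ) : ℂ) else 1) = 1
      rw [dif_pos (one_mem L)]
      have h1 : (⟨(1:G), one_mem L⟩ : ↥L) = 1 := rfl
      rw [h1, map_one, map_one, Units.val_one]
    · intro a ha b hb
      show (if hg : a * b ∈ L then ((φ (π ⟨a * b, hg⟩) : ℂˣ) : ℂ) else 1)
          = (if hg : a ∈ L then ((φ (π ⟨a, hg⟩) : ℂˣ) : ℂ) else 1) *
            (if hg : b ∈ L then ((φ (π ⟨b, hg⟩) : ℂˣ) : ℂ) else 1)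
      rw [dif_pos (mul_mem ha hb), dif_pos ha, dif_pos hb]
      have h1 : (⟨a * b, mul_mem ha hb⟩ : ↥L) = ⟨a, ha⟩ * ⟨b, hb⟩ := rfl
      rw [h1, map_mul, map_mul, Units.val_mul]
    · have hfun : (fun x : ↥L =>
          (if hg : (↑x : G) ∈ L then ((φ (π ⟨↑x, hg⟩) : ℂˣ) : ℂ) else 1))
            = (fun x : ↥L => ((φ (π x) : ℂˣ) : ℂ)) := by
        funext x
        rw [dif_pos x.2]
      rw [hfun]
      exact hφ


end
end

section
/- Let G be a finite group, N ⊴ G, ψ ∈ Irr(N), L ⊴ G with L ≤ N, and λ a linear character of L lying under ψ. Then G(λ,ψ_λ)·N = G(ψ), where ψ_λ is the λ-Clifford correspondent of ψ. Consequently the natural map G(λ)/(G(λ)∩N) → G/N restricts to an isomorphism of G(λ)(ψ_λ)/N(λ) onto G(ψ)/N. -/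
open scoped BigOperators Pointwise Classical

noncomputable section

variable {G : Type}

/- ========================= auxiliary lemmas ========================= -/

section Aux
open CategoryTheory

lemma aux_card_ne_zero [Group G] [Fintype G] (H : Subgroup G) : (Nat.card H : ℂ) ≠ 0 := by
  have : 0 < Nat.card H := Nat.card_pos
  exact_mod_cast this.ne'

lemma aux_sum_dite_mem [Group G] [Fintype G] (H : Subgroup G) (f : ↥H → ℂ) :
    ∑ x : G, (if h : x ∈ H then f ⟨x, h⟩ else 0) = ∑ h : ↥H, f h := by
  rw [← Finset.sum_filter_of_ne (p := (· ∈ H))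
    (fun x _ hx => by by_contra h; simp [h] at hx)]
  rw [Finset.sum_subtype (p := (· ∈ H)) (Finset.univ.filter (· ∈ H)) (by simp)
    (fun x => if h : x ∈ H then f ⟨x, h⟩ else 0)]
  exact Finset.sum_congr rfl fun x _ => by rw [dif_pos x.2]

lemma aux_sum_indicator_const [Group G] [Fintype G] (H : Subgroup G) (c : ℂ) :
    ∑ x : G, (if x ∈ H then c else 0) = (Nat.card H : ℂ) * c := by
  rw [Finset.sum_ite, Finset.sum_const, Finset.sum_const_zero, add_zero, nsmul_eq_mul]
  congr 1
  rw [Nat.card_eq_fintype_card, Fintype.card_subtype]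

/-- conjugation equivalence of `G` -/
def conjE [Group G] (t : G) : G ≃ G where
  toFun x := t * x * t⁻¹
  invFun x := t⁻¹ * x * t
  left_inv x := by group
  right_inv x := by group

@[simp] lemma conjE_apply [Group G] (t x : G) : conjE t x = t * x * t⁻¹ := rfl

lemma aux_normal_conj_iff [Group G] {H : Subgroup G} (hH : H.Normal) (t x : G) :
    x ∈ H ↔ t⁻¹ * x * t ∈ H := by
  constructor
  · intro h; simpa using hH.conj_mem x h t⁻¹
  · intro h
    have := hH.conj_mem _ h t
    have e : t * (t⁻¹ * x * t) * t⁻¹ = x := by group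
    rwa [e] at this

lemma aux_mem_conj_iff [Group G] {H : Subgroup G} {t : G} (ht : t ∈ H) (x : G) :
    x ∈ H ↔ t⁻¹ * x * t ∈ H := by
  constructor
  · intro h; exact mul_mem (mul_mem (inv_mem ht) h) ht
  · intro h
    have := mul_mem (mul_mem ht h) (inv_mem ht)
    have e : t * (t⁻¹ * x * t) * t⁻¹ = x := by group
    rwa [e] at this

lemma aux_lam_conj_mul [Group G] [Fintype G] (L : Subgroup G) (lam : G → ℂ)
    (hlin : lam 1 = 1 ∧ ∀ a ∈ L, ∀ b ∈ L, lam (a * b) = lam a * lam b) :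
    ∀ l ∈ L, (starRingEnd ℂ) (lam l) * lam l = 1 := by
  intro l hl
  have hpow : ∀ n : ℕ, lam (l ^ n) = lam l ^ n := by
    intro n
    induction n with
    | zero => simpa using hlin.1
    | succ n ih => rw [pow_succ, pow_succ, hlin.2 _ (pow_mem hl n) _ hl, ih]
  haveI : Nonempty G := ⟨1⟩
  have hcard : lam l ^ Fintype.card G = 1 := by
    rw [← hpow, pow_card_eq_one, hlin.1]
  have habs : ‖lam l‖ = 1 := by
    have h1 : ‖lam l‖ ^ Fintype.card G = 1 := by
      rw [← norm_pow, hcard, norm_one]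
    rcases lt_trichotomy (‖lam l‖) 1 with h | h | h
    · exfalso
      have := pow_lt_one₀ (norm_nonneg _) h (Fintype.card_ne_zero (α := G))
      rw [h1] at this; exact lt_irrefl 1 this
    · exact h
    · exfalso
      have := one_lt_pow₀ h (Fintype.card_ne_zero (α := G))
      rw [h1] at this; exact lt_irrefl 1 this
  have := Complex.normSq_eq_norm_sq (lam l)
  rw [habs] at this
  simp at this
  rw [mul_comm, Complex.mul_conj, this]
  norm_num

lemma aux_lam_circle_cancel [Group G] (L : Subgroup G) (lam : G → ℂ)
    (hconjmul : ∀ l ∈ L, (starRingEnd ℂ) (lam l) * lam l = 1)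
    {a b : G} (hb : b ∈ L) (hne : lam a ≠ lam b) :
    lam a * (starRingEnd ℂ) (lam b) ≠ 1 := by
  intro h
  apply hne
  have h2 := hconjmul b hb
  calc lam a = lam a * ((starRingEnd ℂ) (lam b) * lam b) := by rw [h2, mul_one]
    _ = (lam a * (starRingEnd ℂ) (lam b)) * lam b := by ring
    _ = lam b := by rw [h, one_mul]

/-- conjugation by an element of `N` fixes the induced function -/
lemma aux_ind_conj_N [Group G] [Fintype G] (N M : Subgroup G) (η : ↥M → ℂ)
    {y : G} (hy : y ∈ N) (u : G) :
    indCharTo N M η (y⁻¹ * u * y) = indCharTo N M η u := by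
  unfold indCharTo
  congr 1
  refine Fintype.sum_equiv (Equiv.mulRight y⁻¹) _ _ fun z => ?_
  simp only [Equiv.coe_mulRight]
  have hmem : z ∈ N ↔ z * y⁻¹ ∈ N := ⟨fun h => mul_mem h (inv_mem hy), fun h => by
    simpa using mul_mem h hy⟩
  by_cases hz : z ∈ N
  · simp only [if_pos hz, hmem.mp hz, ↓reduceIte]
    congr 1
    group
  · simp only [if_neg hz, (show ¬ (z * y⁻¹ ∈ N) from fun h => hz (hmem.mpr h)), ↓reduceIte]

/-- conjugation by an element fixing `extZero M η` fixes the induced function -/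
lemma aux_ind_conj_stab [Group G] [Fintype G] (N M : Subgroup G) (hN : N.Normal) (η : ↥M → ℂ)
    {s : G} (hstab : ∀ x : G, extZero M η (s⁻¹ * x * s) = extZero M η x) (u : G) :
    indCharTo N M η (s⁻¹ * u * s) = indCharTo N M η u := by
  unfold indCharTo
  congr 1
  refine (Fintype.sum_equiv (conjE s⁻¹) _ _ fun v => ?_).symm
  simp only [conjE_apply, inv_inv]
  rw [← aux_normal_conj_iff hN s v]
  by_cases hv : v ∈ N
  · rw [if_pos hv, if_pos hv]
    have e : s⁻¹ * v * s * (s⁻¹ * u * s) * (s⁻¹ * v * s)⁻¹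
        = s⁻¹ * (v * u * v⁻¹) * s := by group
    rw [e, hstab (v * u * v⁻¹)]
  · rw [if_neg hv, if_neg hv]

lemma rho_smul_id {X : Type} [Group X] [Fintype X] (V : FDRep ℂ X) (hV : Simple V)
    (K : Subgroup X) (hK : K.Normal) (μ : X → ℂ)
    (hμ1 : μ 1 = 1) (hmul : ∀ a ∈ K, ∀ b ∈ K, μ (a * b) = μ a * μ b)
    (hconj : ∀ k ∈ K, (starRingEnd ℂ) (μ k) * μ k = 1)
    (hinvar : ∀ (g : X), ∀ k ∈ K, μ (g⁻¹ * k * g) = μ k)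
    (hn : (∑ k : K, V.character ↑k * (starRingEnd ℂ) (μ ↑k)) ≠ 0) :
    ∀ k ∈ K, V.ρ k = μ k • (LinearMap.id : V →ₗ[ℂ] V) := by
  haveI := hV
  have hμne : ∀ k ∈ K, μ k ≠ 0 := by
    intro k hk h0
    have := hconj k hk
    rw [h0, mul_zero] at this
    exact zero_ne_one this
  have hμinv : ∀ k ∈ K, μ k⁻¹ = (starRingEnd ℂ) (μ k) := by
    intro k hk
    have h1 : μ (k⁻¹ * k) = μ k⁻¹ * μ k := hmul _ (inv_mem hk) _ hk
    rw [inv_mul_cancel, hμ1] at h1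
    exact mul_right_cancel₀ (hμne k hk) (h1.symm.trans (hconj k hk).symm)
  set π : V →ₗ[ℂ] V := ∑ k : K, (starRingEnd ℂ) (μ ↑k) • (V.ρ ↑k : V →ₗ[ℂ] V) with hπ
  have hcompsum : ∀ (g : X), (V.ρ g : V →ₗ[ℂ] V) ∘ₗ π
      = ∑ k : K, (starRingEnd ℂ) (μ ↑k) • (V.ρ (g * ↑k) : V →ₗ[ℂ] V) := by
    intro g
    ext v
    simp [hπ, LinearMap.sum_apply, map_sum, map_smul, map_mul, Module.End.mul_apply]
  have hsumcomp : ∀ (g : X), π ∘ₗ (V.ρ g : V →ₗ[ℂ] V)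
      = ∑ k : K, (starRingEnd ℂ) (μ ↑k) • (V.ρ (↑k * g) : V →ₗ[ℂ] V) := by
    intro g
    ext v
    simp [hπ, LinearMap.sum_apply, map_mul, Module.End.mul_apply]
  have hμconjmem : ∀ (g : X), ∀ k ∈ K, μ (g * k * g⁻¹) = μ k := by
    intro g k hk
    have := hinvar g⁻¹ k hk
    simpa using this
  have hcomm : ∀ g : X, (V.ρ g : V →ₗ[ℂ] V) ∘ₗ π = π ∘ₗ V.ρ g := by
    intro g
    rw [hcompsum g, hsumcomp g]
    refine Fintype.sum_equiv
      (⟨fun k => ⟨g * ↑k * g⁻¹, by simpa using hK.conj_mem _ k.2 g⟩,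
       fun k => ⟨g⁻¹ * ↑k * g, by simpa using hK.conj_mem _ k.2 g⁻¹⟩,
       fun k => Subtype.ext (by simp only []; group),
       fun k => Subtype.ext (by simp only []; group)⟩ : (K : Type) ≃ (K : Type)) _ _ fun k => ?_
    simp only [Equiv.coe_fn_mk]
    rw [hμconjmem g ↑k k.2]
    congr 2
    group
  set f : V ⟶ V := Action.Hom.mk (FGModuleCat.ofHom π) (fun g => by
    ext v; exact LinearMap.congr_fun (hcomm g).symm v) with hf
  obtain ⟨c, hc⟩ := CategoryTheory.endomorphism_simple_eq_smul_id (𝕜 := ℂ) f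
  have hπc : π = c • LinearMap.id := by
    have h : (c • 𝟙 V : V ⟶ V).hom.hom.hom = π := congrArg (fun f => f.hom.hom.hom) hc
    rw [← h]
    simp
    rfl
  have htr : LinearMap.trace ℂ V π = ∑ k : K, V.character ↑k * (starRingEnd ℂ) (μ ↑k) := by
    rw [hπ, map_sum]
    refine Finset.sum_congr rfl fun k _ => ?_
    rw [map_smul]
    simp [FDRep.character, mul_comm]
  have hcne : c ≠ 0 := by
    intro h0
    rw [hπc, h0, zero_smul, map_zero] at htr
    exact hn htr.symm
  intro k hk
  have htw : (V.ρ k : V →ₗ[ℂ] V) ∘ₗ π = μ k • π := by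
    rw [hcompsum k, hπ, Finset.smul_sum]
    refine (Fintype.sum_equiv
      (⟨fun j => ⟨k⁻¹ * ↑j, mul_mem (inv_mem hk) j.2⟩,
       fun j => ⟨k * ↑j, mul_mem hk j.2⟩,
       fun j => Subtype.ext (by simp only []; group),
       fun j => Subtype.ext (by simp only []; group)⟩ : (K : Type) ≃ (K : Type)) _ _ fun j => ?_).symm
    simp only [Equiv.coe_fn_mk]
    rw [smul_smul, hmul _ (inv_mem hk) _ j.2, map_mul, ← hμinv _ (inv_mem hk), inv_inv]
    congr 1
    group
  rw [hπc] at htw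
  have h1 : (V.ρ k : V →ₗ[ℂ] V) ∘ₗ (c • LinearMap.id) = c • (V.ρ k : V →ₗ[ℂ] V) := by
    ext v; simp
  rw [h1] at htw
  have h2 : μ k • (c • (LinearMap.id : V →ₗ[ℂ] V)) = c • (μ k • LinearMap.id) := by
    rw [smul_comm]
  rw [h2] at htw
  exact smul_right_injective _ hcne htw

end Aux

lemma mackey_core [Group G] [Fintype G] (N M L : Subgroup G) (hN : N.Normal) (hLM : L ≤ M) (hMN : M ≤ N)
    (lam : G → ℂ)
    (hconjmul : ∀ l ∈ L, (starRingEnd ℂ) (lam l) * lam l = 1)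
    (hLmul : ∀ a ∈ L, ∀ b ∈ L, lam (a * b) = lam a * lam b)
    (hLnorm : ∀ (w l : G), l ∈ L → w * l * w⁻¹ ∈ L)
    (hsep : ∀ w ∈ N, w ∉ M → ∃ l ∈ L, lam (w * l * w⁻¹) ≠ lam l)
    (η η' : ↥M → ℂ)
    (hη : ∀ (u l : G), l ∈ L → extZero M η (u * l) = extZero M η u * lam l)
    (hη' : ∀ (u l : G), l ∈ L → extZero M η' (u * l) = extZero M η' u * lam l)
    (hclass : ∀ a b : ↥M, η' (a * b) = η' (b * a)) :
    ∑ x : G, indCharTo N M η x * (starRingEnd ℂ) (indCharTo N M η' x)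
      = (Nat.card N : ℂ) * (Nat.card M : ℂ)⁻¹ *
        ∑ u : G, extZero M η u * (starRingEnd ℂ) (extZero M η' u) := by
  set cM : ℂ := (Nat.card M : ℂ) with hcM
  set cN : ℂ := (Nat.card N : ℂ) with hcN
  set S0 : ℂ := ∑ u : G, extZero M η u * (starRingEnd ℂ) (extZero M η' u) with hS0
  set D : G → ℂ := fun w => ∑ u : G, extZero M η u * (starRingEnd ℂ) (extZero M η' (w * u * w⁻¹)) with hD
  -- Step A : the inner function S1
  set S1 : ℂ := ∑ u : G, extZero M η u * (starRingEnd ℂ) (indCharTo N M η' u) with hS1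
  -- Step 1 : LHS = cM⁻¹ * cN * S1
  have step1 : ∑ x : G, indCharTo N M η x * (starRingEnd ℂ) (indCharTo N M η' x)
      = cM⁻¹ * (cN * S1) := by
    have e1 : ∀ x : G, indCharTo N M η x * (starRingEnd ℂ) (indCharTo N M η' x)
        = cM⁻¹ * ∑ y : G, (if y ∈ N then extZero M η (y * x * y⁻¹) * (starRingEnd ℂ) (indCharTo N M η' x) else 0) := by
      intro x
      rw [indCharTo, mul_assoc]
      congr 1
      rw [Finset.sum_mul]
      refine Finset.sum_congr rfl fun y _ => ?_
      by_cases hy : y ∈ N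
      · rw [if_pos hy, if_pos hy]
      · rw [if_neg hy, if_neg hy, zero_mul]
    rw [Finset.sum_congr rfl fun x _ => e1 x, ← Finset.mul_sum]
    congr 1
    rw [Finset.sum_comm]
    have e2 : ∀ y : G, ∑ x : G, (if y ∈ N then extZero M η (y * x * y⁻¹) * (starRingEnd ℂ) (indCharTo N M η' x) else 0)
        = (if y ∈ N then S1 else 0) := by
      intro y
      by_cases hy : y ∈ N
      · simp only [if_pos hy]
        rw [hS1]
        refine (Fintype.sum_equiv (conjE y⁻¹) _ _ fun u => ?_).symm
        simp only [conjE_apply, inv_inv]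
        have e3 : y * (y⁻¹ * u * y) * y⁻¹ = u := by group
        rw [e3, aux_ind_conj_N N M η' hy u]
      · simp only [if_neg hy, Finset.sum_const_zero]
    rw [Finset.sum_congr rfl fun y _ => e2 y, aux_sum_indicator_const]
  -- Step 2
  have step2 : S1 = cM⁻¹ * ∑ w : G, (if w ∈ N then D w else 0) := by
    have e1 : ∀ u : G, extZero M η u * (starRingEnd ℂ) (indCharTo N M η' u)
        = cM⁻¹ * ∑ w : G, (if w ∈ N then extZero M η u * (starRingEnd ℂ) (extZero M η' (w * u * w⁻¹)) else 0) := by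
      intro u
      have e0 : (starRingEnd ℂ) (indCharTo N M η' u)
          = cM⁻¹ * ∑ w : G, (if w ∈ N then (starRingEnd ℂ) (extZero M η' (w * u * w⁻¹)) else 0) := by
        rw [indCharTo, map_mul, map_inv₀, map_natCast, map_sum]
        congr 1
        refine Finset.sum_congr rfl fun w _ => ?_
        rw [apply_ite (starRingEnd ℂ), map_zero]
      rw [e0, ← mul_assoc, mul_comm (extZero M η u) cM⁻¹, mul_assoc]
      congr 1
      rw [Finset.mul_sum]
      refine Finset.sum_congr rfl fun w _ => ?_
      by_cases hw : w ∈ N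
      · rw [if_pos hw, if_pos hw]
      · rw [if_neg hw, if_neg hw, mul_zero]
    rw [hS1, Finset.sum_congr rfl fun u _ => e1 u, ← Finset.mul_sum]
    congr 1
    rw [Finset.sum_comm]
    refine Finset.sum_congr rfl fun w _ => ?_
    by_cases hw : w ∈ N
    · simp only [if_pos hw, hD]
    · simp only [if_neg hw, Finset.sum_const_zero]
  -- Step 3 : vanishing off M
  have step3 : ∀ w, w ∈ N → w ∉ M → D w = 0 := by
    intro w hwN hwM
    obtain ⟨l, hl, hlne⟩ := hsep w hwN hwM
    have hlw : w * l * w⁻¹ ∈ L := hLnorm w l hl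
    have key : D w = (lam l * (starRingEnd ℂ) (lam (w * l * w⁻¹))) * D w := by
      have r1 : D w = ∑ u : G, extZero M η (u * l) * (starRingEnd ℂ) (extZero M η' (w * (u * l) * w⁻¹)) := by
        rw [hD]
        refine Fintype.sum_equiv (Equiv.mulRight l⁻¹) _ _ fun u => ?_
        simp only [Equiv.coe_mulRight, inv_mul_cancel_right]
      conv_lhs => rw [r1]
      simp only [hD, Finset.mul_sum]
      refine Finset.sum_congr rfl fun u _ => ?_
      rw [hη u l hl, show w * (u * l) * w⁻¹ = (w * u * w⁻¹) * (w * l * w⁻¹) from by group,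
        hη' (w * u * w⁻¹) (w * l * w⁻¹) hlw, map_mul]
      ring
    have hne1 : lam l * (starRingEnd ℂ) (lam (w * l * w⁻¹)) ≠ 1 :=
      aux_lam_circle_cancel L lam hconjmul hlw hlne.symm
    have h0 : (1 - lam l * (starRingEnd ℂ) (lam (w * l * w⁻¹))) * D w = 0 := by
      linear_combination key
    rcases mul_eq_zero.mp h0 with h | h
    · exact absurd (by linear_combination -h) hne1
    · exact h
  -- Step 4 : w ∈ M gives S0
  have step4 : ∀ w ∈ M, D w = S0 := by
    intro w hw
    simp only [hD, hS0]
    refine Finset.sum_congr rfl fun u _ => ?_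
    have hiff : u ∈ M ↔ w * u * w⁻¹ ∈ M := by
      constructor
      · intro h; exact mul_mem (mul_mem hw h) (inv_mem hw)
      · intro h
        have := mul_mem (mul_mem (inv_mem hw) h) hw
        rwa [show w⁻¹ * (w * u * w⁻¹) * w = u from by group] at this
    have hez : extZero M η' (w * u * w⁻¹) = extZero M η' u := by
      by_cases hu : u ∈ M
      · rw [extZero, dif_pos (hiff.mp hu), extZero, dif_pos hu]
        have e1 : η' ⟨w * u * w⁻¹, hiff.mp hu⟩ = η' ((⟨w, hw⟩ * ⟨u, hu⟩) * (⟨w, hw⟩)⁻¹) := by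
          congr 1
        have e2 : η' ⟨u, hu⟩ = η' ((⟨w, hw⟩)⁻¹ * (⟨w, hw⟩ * ⟨u, hu⟩)) := by
          congr 1
          ext
          simp
        rw [e1, e2]
        exact hclass _ _
      · rw [extZero, dif_neg (fun h => hu (hiff.mpr h)), extZero, dif_neg hu]
    rw [hez]
  -- Step 5
  have step5 : ∑ w : G, (if w ∈ N then D w else 0) = cM * S0 := by
    have e : ∀ w : G, (if w ∈ N then D w else 0) = (if w ∈ M then S0 else 0) := by
      intro w
      by_cases hwM : w ∈ M
      · rw [if_pos hwM, if_pos (hMN hwM), step4 w hwM]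
      · rw [if_neg hwM]
        by_cases hwN : w ∈ N
        · rw [if_pos hwN, step3 w hwN hwM]
        · rw [if_neg hwN]
    rw [Finset.sum_congr rfl fun w _ => e w, aux_sum_indicator_const]
  rw [step1, step2, step5]
  have hMne : cM ≠ 0 := by rw [hcM]; exact aux_card_ne_zero M
  field_simp


theorem stmt_9 [Group G] [Fintype G] (N : Subgroup G) (hN : N.Normal) (ψ : ↥N → ℂ)
    (hψ : IsIrrChar ↥N ψ) (L : Subgroup G) (hL : L.Normal) (hLN : L ≤ N)
    (lam : G → ℂ) (hlin : IsLinOn L lam)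
    (hunder : innerSub L (resTo L hLN ψ) (fun x : ↥L => lam ↑x) ≠ 0)
    (hLsub : L ≤ linStab L hL lam ⊓ N)
    (ψlam : ↥(linStab L hL lam ⊓ N) → ℂ)
    (hirr : IsIrrChar ↥(linStab L hL lam ⊓ N) ψlam)
    (hover : innerSub L (resTo L hLsub ψlam) (fun x : ↥L => lam ↑x) ≠ 0)
    (hind : indCharTo N (linStab L hL lam ⊓ N) ψlam = extZero N ψ) :
    ({g : G | g ∈ linStab L hL lam ∧ g ∈ stabSet (linStab L hL lam ⊓ N) ψlam} *
        (N : Set G) =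
      {g : G | ∀ x : G, extZero N ψ (g⁻¹ * x * g) = extZero N ψ x}) ∧
    (∀ a b : G, a ∈ linStab L hL lam → a ∈ stabSet (linStab L hL lam ⊓ N) ψlam →
      b ∈ linStab L hL lam → b ∈ stabSet (linStab L hL lam ⊓ N) ψlam →
      a⁻¹ * b ∈ N → a⁻¹ * b ∈ linStab L hL lam ⊓ N) := by
  classical
  obtain ⟨hlam1, hlammul⟩ := hlin
  have hmemT : ∀ g : G, g ∈ (linStab L hL lam) ↔ ∀ x ∈ L, lam (g⁻¹ * x * g) = lam x := fun g => Iff.rfl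
  have hLM : L ≤ (linStab L hL lam ⊓ N) := hLsub
  have hMN : (linStab L hL lam ⊓ N) ≤ N := inf_le_right
  have hMT : (linStab L hL lam ⊓ N) ≤ (linStab L hL lam) := inf_le_left
  have hconjmul := aux_lam_conj_mul L lam ⟨hlam1, hlammul⟩
  -- ### homogeneity of ψlam over λ
  obtain ⟨V, hVs, hVchar⟩ := hirr
  set K : Subgroup ↥(linStab L hL lam ⊓ N) := L.subgroupOf (linStab L hL lam ⊓ N) with hKdef
  have hKnorm : K.Normal := hL.subgroupOf (linStab L hL lam ⊓ N)
  have hmemK : ∀ k : ↥(linStab L hL lam ⊓ N), k ∈ K ↔ (↑k : G) ∈ L := fun k => Subgroup.mem_subgroupOf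
  have hover' : (∑ k : ↥K, V.character ↑k * (starRingEnd ℂ) (lam ↑↑k)) ≠ 0 := by
    intro h
    apply hover
    rw [innerSub]
    have e1 : ∀ x : G, extZero L (resTo L hLsub ψlam) x *
        (starRingEnd ℂ) (extZero L (fun x : ↥L => lam ↑x) x)
        = (if hx : x ∈ L then ψlam ⟨x, hLsub hx⟩ * (starRingEnd ℂ) (lam x) else 0) := by
      intro x
      by_cases hx : x ∈ L
      · rw [extZero, dif_pos hx, extZero, dif_pos hx, dif_pos hx]
        rfl
      · rw [extZero, dif_neg hx, extZero, dif_neg hx, dif_neg hx, zero_mul]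
    have e4 : ∑ x : G, (if hx : x ∈ L then ψlam ⟨x, hLsub hx⟩ * (starRingEnd ℂ) (lam x) else 0)
        = ∑ l : ↥L, ψlam ⟨↑l, hLsub l.2⟩ * (starRingEnd ℂ) (lam ↑l) := by
      rw [← aux_sum_dite_mem L (fun l : ↥L => ψlam ⟨↑l, hLsub l.2⟩ * (starRingEnd ℂ) (lam ↑l))]
    rw [Finset.sum_congr rfl fun x _ => e1 x, e4]
    have e2 : (∑ l : ↥L, ψlam ⟨↑l, hLsub l.2⟩ * (starRingEnd ℂ) (lam ↑l)) = 0 := by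
      rw [← h]
      refine Fintype.sum_equiv
        (⟨fun l => ⟨⟨↑l, hLsub l.2⟩, (hmemK _).mpr l.2⟩,
          fun k => ⟨↑↑k, (hmemK _).mp k.2⟩,
          fun l => Subtype.ext rfl,
          fun k => Subtype.ext (Subtype.ext rfl)⟩ : (↥L ≃ ↥K)) _ _ fun l => ?_
      simp only [Equiv.coe_fn_mk]
      rw [hVchar]
    rw [e2, mul_zero]
  have hrho := rho_smul_id V hVs K hKnorm (fun m : ↥(linStab L hL lam ⊓ N) => lam ↑m)
    (by simpa using hlam1)
    (fun a ha b hb => hlammul _ ((hmemK a).mp ha) _ ((hmemK b).mp hb))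
    (fun k hk => hconjmul _ ((hmemK k).mp hk))
    (fun g k hk => (hmemT ↑g).mp (hMT g.2) _ ((hmemK k).mp hk))
    hover'
  have hhom : ∀ (m : ↥(linStab L hL lam ⊓ N)) (l : ↥(linStab L hL lam ⊓ N)), (↑l : G) ∈ L → ψlam (m * l) = ψlam m * lam ↑l := by
    intro m l hl
    have h1 : V.ρ l = lam ↑l • (LinearMap.id : V →ₗ[ℂ] V) := hrho l ((hmemK l).mpr hl)
    have h2 : ψlam (m * l) = LinearMap.trace ℂ V (V.ρ (m * l)) := by rw [← hVchar]; rfl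
    have h4 : LinearMap.trace ℂ V (V.ρ m) = ψlam m := by rw [← hVchar]; rfl
    rw [h2, map_mul, h1]
    have h3 : (V.ρ m : V →ₗ[ℂ] V) * (lam ↑l • LinearMap.id) = lam ↑l • (V.ρ m : V →ₗ[ℂ] V) := by
      ext v; simp
    rw [h3, map_smul, smul_eq_mul, h4, mul_comm]
  have hclass : ∀ a b : ↥(linStab L hL lam ⊓ N), ψlam (a * b) = ψlam (b * a) := by
    intro a b; rw [← hVchar]; exact FDRep.char_mul_comm V b a
  have hezhom : ∀ (u l : G), l ∈ L → extZero (linStab L hL lam ⊓ N) ψlam (u * l) = extZero (linStab L hL lam ⊓ N) ψlam u * lam l := by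
    intro u l hl
    by_cases hu : u ∈ (linStab L hL lam ⊓ N)
    · have hul : u * l ∈ (linStab L hL lam ⊓ N) := mul_mem hu (hLM hl)
      rw [extZero, dif_pos hul, extZero, dif_pos hu]
      have e : (⟨u * l, hul⟩ : ↥(linStab L hL lam ⊓ N)) = ⟨u, hu⟩ * ⟨l, hLM hl⟩ := rfl
      rw [e]
      exact hhom ⟨u, hu⟩ ⟨l, hLM hl⟩ hl
    · have hul : u * l ∉ (linStab L hL lam ⊓ N) := by
        intro h
        apply hu
        have := mul_mem h (inv_mem (hLM hl))
        rwa [mul_inv_cancel_right] at this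
      rw [extZero, dif_neg hul, extZero, dif_neg hu, zero_mul]
  -- ### separation
  have hsep : ∀ w ∈ N, w ∉ (linStab L hL lam ⊓ N) → ∃ l ∈ L, lam (w * l * w⁻¹) ≠ lam l := by
    intro w hwN hwM
    have hwT : w ∉ (linStab L hL lam) := fun h => hwM (Subgroup.mem_inf.mpr ⟨h, hwN⟩)
    rw [hmemT] at hwT
    push_neg at hwT
    obtain ⟨x, hx, hne⟩ := hwT
    refine ⟨w⁻¹ * x * w, by simpa using hL.conj_mem x hx w⁻¹, ?_⟩
    have e : w * (w⁻¹ * x * w) * w⁻¹ = x := by group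
    rw [e]
    exact hne.symm
  have hLnorm : ∀ (w l : G), l ∈ L → w * l * w⁻¹ ∈ L := fun w l hl => hL.conj_mem l hl w
  -- ### stabilizer inclusions
  have hN_in : ∀ n, n ∈ N → ∀ x, extZero N ψ (n⁻¹ * x * n) = extZero N ψ x := by
    intro n hn x
    rw [← hind]
    exact aux_ind_conj_N N (linStab L hL lam ⊓ N) ψlam hn x
  have hstab_in : ∀ s : G, (∀ x, extZero (linStab L hL lam ⊓ N) ψlam (s⁻¹ * x * s) = extZero (linStab L hL lam ⊓ N) ψlam x) →
      ∀ x, extZero N ψ (s⁻¹ * x * s) = extZero N ψ x := by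
    intro s hs x
    rw [← hind]
    exact aux_ind_conj_stab N (linStab L hL lam ⊓ N) hN ψlam hs x
  constructor
  · -- the set equality
    apply Set.Subset.antisymm
    · rintro g hg
      rw [Set.mem_mul] at hg
      obtain ⟨a, ha, n, hn, rfl⟩ := hg
      intro x
      have e : (a * n)⁻¹ * x * (a * n) = n⁻¹ * (a⁻¹ * x * a) * n := by group
      rw [e, hN_in n hn _, hstab_in a ha.2.2 x]
    · intro g hg
      -- hg : ∀ x, extZero N ψ (g⁻¹ * x * g) = extZero N ψ x
      have hS0 : (∑ x : G, (if x ∈ L then extZero N ψ x * (starRingEnd ℂ) (lam x) else 0)) ≠ 0 := by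
        intro h0
        apply hunder
        rw [innerSub]
        have e1 : ∀ x : G, extZero L (resTo L hLN ψ) x *
            (starRingEnd ℂ) (extZero L (fun x : ↥L => lam ↑x) x)
            = (if x ∈ L then extZero N ψ x * (starRingEnd ℂ) (lam x) else 0) := by
          intro x
          by_cases hx : x ∈ L
          · rw [if_pos hx, extZero, dif_pos hx, extZero, dif_pos hx, extZero, dif_pos (hLN hx)]
            rfl
          · rw [if_neg hx, extZero, dif_neg hx, extZero, dif_neg hx, zero_mul]
        rw [Finset.sum_congr rfl fun x _ => e1 x, h0, mul_zero]
      have hS1 : (∑ x : G, (if x ∈ L then extZero N ψ x *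
          (starRingEnd ℂ) (lam (g * x * g⁻¹)) else 0)) ≠ 0 := by
        have hswap : (∑ x : G, (if x ∈ L then extZero N ψ x * (starRingEnd ℂ) (lam x) else 0))
            = (∑ x : G, (if x ∈ L then extZero N ψ x *
                (starRingEnd ℂ) (lam (g * x * g⁻¹)) else 0)) := by
          refine Fintype.sum_equiv (conjE g⁻¹) _ _ fun u => ?_
          simp only [conjE_apply, inv_inv]
          rw [← aux_normal_conj_iff hL g u]
          by_cases hu : u ∈ L
          · rw [if_pos hu, if_pos hu, hg u]
            have e : g * (g⁻¹ * u * g) * g⁻¹ = u := by group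
            rw [e]
          · rw [if_neg hu, if_neg hu]
        intro h1
        exact hS0 (hswap.trans h1)
      have hexp : ∀ x ∈ L, extZero N ψ x
          = (Nat.card ↥(linStab L hL lam ⊓ N) : ℂ)⁻¹ * ∑ y : G, (if y ∈ N then ψlam 1 * lam (y * x * y⁻¹) else 0) := by
        intro x hx
        rw [← hind, indCharTo]
        congr 1
        refine Finset.sum_congr rfl fun y _ => ?_
        by_cases hy : y ∈ N
        · rw [if_pos hy, if_pos hy]
          have hyx : y * x * y⁻¹ ∈ L := hL.conj_mem x hx y
          have h2 := hezhom 1 (y * x * y⁻¹) hyx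
          rw [one_mul] at h2
          rw [h2]
          congr 1
          rw [extZero, dif_pos (one_mem (linStab L hL lam ⊓ N))]
          rfl
        · rw [if_neg hy, if_neg hy]
      have hS2 : (∑ y : G, (if y ∈ N then ψlam 1 *
          (∑ x : G, (if x ∈ L then lam (y * x * y⁻¹) *
            (starRingEnd ℂ) (lam (g * x * g⁻¹)) else 0)) else 0)) ≠ 0 := by
        intro h2
        apply hS1
        have e1 : ∀ x : G, (if x ∈ L then extZero N ψ x *
            (starRingEnd ℂ) (lam (g * x * g⁻¹)) else 0)
            = (Nat.card ↥(linStab L hL lam ⊓ N) : ℂ)⁻¹ * ∑ y : G, (if x ∈ L then (if y ∈ N then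
                ψlam 1 * lam (y * x * y⁻¹) * (starRingEnd ℂ) (lam (g * x * g⁻¹)) else 0) else 0) := by
          intro x
          by_cases hx : x ∈ L
          · simp only [if_pos hx]
            rw [hexp x hx, mul_assoc]
            congr 1
            rw [Finset.sum_mul]
            refine Finset.sum_congr rfl fun y _ => ?_
            by_cases hy : y ∈ N
            · rw [if_pos hy, if_pos hy]
            · rw [if_neg hy, if_neg hy, zero_mul]
          · simp only [if_neg hx, Finset.sum_const_zero, mul_zero]
        rw [Finset.sum_congr rfl fun x _ => e1 x, ← Finset.mul_sum, Finset.sum_comm]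
        have e2 : ∀ y : G, (∑ x : G, (if x ∈ L then (if y ∈ N then
            ψlam 1 * lam (y * x * y⁻¹) * (starRingEnd ℂ) (lam (g * x * g⁻¹)) else 0) else 0))
            = (if y ∈ N then ψlam 1 * (∑ x : G, (if x ∈ L then lam (y * x * y⁻¹) *
                (starRingEnd ℂ) (lam (g * x * g⁻¹)) else 0)) else 0) := by
          intro y
          by_cases hy : y ∈ N
          · simp only [if_pos hy, Finset.mul_sum]
            refine Finset.sum_congr rfl fun x _ => ?_
            by_cases hx : x ∈ L
            · rw [if_pos hx, if_pos hx, mul_assoc]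
            · rw [if_neg hx, if_neg hx, mul_zero]
          · simp only [if_neg hy, ite_self, Finset.sum_const_zero]
        rw [Finset.sum_congr rfl fun y _ => e2 y, h2, mul_zero]
      obtain ⟨y, -, hy⟩ := Finset.exists_ne_zero_of_sum_ne_zero hS2
      have hyN : y ∈ N := by
        by_contra h
        rw [if_neg h] at hy
        exact hy rfl
      rw [if_pos hyN] at hy
      have hCy : (∑ x : G, (if x ∈ L then lam (y * x * y⁻¹) *
          (starRingEnd ℂ) (lam (g * x * g⁻¹)) else 0)) ≠ 0 :=
        fun h => hy (by rw [h, mul_zero])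
      have hall : ∀ x ∈ L, lam (y * x * y⁻¹) = lam (g * x * g⁻¹) := by
        by_contra hcon
        push_neg at hcon
        obtain ⟨x₀, hx₀, hne⟩ := hcon
        apply hCy
        set a : ℂ := lam (y * x₀ * y⁻¹) * (starRingEnd ℂ) (lam (g * x₀ * g⁻¹)) with hadef
        have key : (∑ x : G, (if x ∈ L then lam (y * x * y⁻¹) *
            (starRingEnd ℂ) (lam (g * x * g⁻¹)) else 0))
            = a * (∑ x : G, (if x ∈ L then lam (y * x * y⁻¹) *
                (starRingEnd ℂ) (lam (g * x * g⁻¹)) else 0)) := by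
          rw [Finset.mul_sum]
          refine (Fintype.sum_equiv (Equiv.mulLeft x₀) _ _ fun x => ?_).symm
          simp only [Equiv.coe_mulLeft]
          by_cases hx : x ∈ L
          · simp only [if_pos hx, mul_mem hx₀ hx, ↓reduceIte]
            have e1 : y * (x₀ * x) * y⁻¹ = (y * x₀ * y⁻¹) * (y * x * y⁻¹) := by group
            have e2 : g * (x₀ * x) * g⁻¹ = (g * x₀ * g⁻¹) * (g * x * g⁻¹) := by group
            rw [e1, e2, hlammul _ (hLnorm y x₀ hx₀) _ (hLnorm y x hx),
              hlammul _ (hLnorm g x₀ hx₀) _ (hLnorm g x hx), map_mul, hadef]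
            ring
          · simp only [if_neg hx, (show ¬ (x₀ * x ∈ L) from fun h => hx (by
              have := mul_mem (inv_mem hx₀) h
              rwa [inv_mul_cancel_left] at this)), ↓reduceIte, mul_zero]
        have hne1 : a ≠ 1 := by
          rw [hadef]
          exact aux_lam_circle_cancel L lam hconjmul (hLnorm g x₀ hx₀) hne
        have h0 : (1 - a) * (∑ x : G, (if x ∈ L then lam (y * x * y⁻¹) *
            (starRingEnd ℂ) (lam (g * x * g⁻¹)) else 0)) = 0 := by
          linear_combination key
        rcases mul_eq_zero.mp h0 with h | h
        · exact absurd (by linear_combination -h) hne1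
        · exact h
      -- define s and prove memberships
      set s := g * y⁻¹ with hsdef
      have hsT : s ∈ (linStab L hL lam) := by
        rw [hmemT]
        intro x hx
        have hl2 : g⁻¹ * x * g ∈ L := (aux_normal_conj_iff hL g x).mp hx
        have h1 := hall _ hl2
        have e1 : y * (g⁻¹ * x * g) * y⁻¹ = s⁻¹ * x * s := by rw [hsdef]; group
        have e2 : g * (g⁻¹ * x * g) * g⁻¹ = x := by group
        rw [e1, e2] at h1
        exact h1
      have hsG : ∀ x, extZero N ψ (s⁻¹ * x * s) = extZero N ψ x := by
        intro x
        have e : s⁻¹ * x * s = (y⁻¹)⁻¹ * (g⁻¹ * x * g) * y⁻¹ := by rw [hsdef]; group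
        rw [e, hN_in y⁻¹ (inv_mem hyN) _, hg x]
      -- uniqueness of the Clifford correspondent : s stabilizes ψlam
      have hsM : ∀ u : G, u ∈ (linStab L hL lam ⊓ N) ↔ s⁻¹ * u * s ∈ (linStab L hL lam ⊓ N) := by
        intro u
        constructor
        · intro h
          obtain ⟨h1, h2⟩ := Subgroup.mem_inf.mp h
          exact Subgroup.mem_inf.mpr ⟨(aux_mem_conj_iff hsT u).mp h1,
            (aux_normal_conj_iff hN s u).mp h2⟩
        · intro h
          obtain ⟨h1, h2⟩ := Subgroup.mem_inf.mp h
          exact Subgroup.mem_inf.mpr ⟨(aux_mem_conj_iff hsT u).mpr h1,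
            (aux_normal_conj_iff hN s u).mpr h2⟩
      set θ : ↥(linStab L hL lam ⊓ N) → ℂ := fun m => ψlam ⟨s⁻¹ * ↑m * s, (hsM ↑m).mp m.2⟩ with hθdef
      have hezθ : ∀ u : G, extZero (linStab L hL lam ⊓ N) θ u = extZero (linStab L hL lam ⊓ N) ψlam (s⁻¹ * u * s) := by
        intro u
        by_cases hu : u ∈ (linStab L hL lam ⊓ N)
        · rw [extZero, dif_pos hu, extZero, dif_pos ((hsM u).mp hu)]
        · rw [extZero, dif_neg hu, extZero, dif_neg (fun h => hu ((hsM u).mpr h))]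
      have hIndθ : ∀ u : G, indCharTo N (linStab L hL lam ⊓ N) θ u = indCharTo N (linStab L hL lam ⊓ N) ψlam u := by
        intro u
        have e1 : indCharTo N (linStab L hL lam ⊓ N) θ u = indCharTo N (linStab L hL lam ⊓ N) ψlam (s⁻¹ * u * s) := by
          rw [indCharTo, indCharTo]
          congr 1
          refine Fintype.sum_equiv (conjE s⁻¹) _ _ fun z => ?_
          simp only [conjE_apply, inv_inv]
          rw [hezθ, ← aux_normal_conj_iff hN s z]
          by_cases hz : z ∈ N
          · rw [if_pos hz, if_pos hz]
            have e : (s⁻¹ * z * s) * (s⁻¹ * u * s) * (s⁻¹ * z * s)⁻¹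
                = s⁻¹ * (z * u * z⁻¹) * s := by group
            rw [e]
          · rw [if_neg hz, if_neg hz]
        rw [e1, hind]
        exact hsG u
      have hθhom : ∀ (u l : G), l ∈ L → extZero (linStab L hL lam ⊓ N) θ (u * l) = extZero (linStab L hL lam ⊓ N) θ u * lam l := by
        intro u l hl
        have hls : s⁻¹ * l * s ∈ L := (aux_normal_conj_iff hL s l).mp hl
        rw [hezθ, hezθ]
        have e : s⁻¹ * (u * l) * s = (s⁻¹ * u * s) * (s⁻¹ * l * s) := by group
        rw [e, hezhom _ _ hls, (hmemT s).mp hsT l hl]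
      have hmackey1 := mackey_core N (linStab L hL lam ⊓ N) L hN hLM hMN lam hconjmul hlammul hLnorm hsep
        θ ψlam hθhom hezhom hclass
      have hmackey2 := mackey_core N (linStab L hL lam ⊓ N) L hN hLM hMN lam hconjmul hlammul hLnorm hsep
        ψlam ψlam hezhom hezhom hclass
      have hLHSeq : ∑ x : G, indCharTo N (linStab L hL lam ⊓ N) θ x * (starRingEnd ℂ) (indCharTo N (linStab L hL lam ⊓ N) ψlam x)
          = ∑ x : G, indCharTo N (linStab L hL lam ⊓ N) ψlam x * (starRingEnd ℂ) (indCharTo N (linStab L hL lam ⊓ N) ψlam x) :=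
        Finset.sum_congr rfl fun x _ => by rw [hIndθ x]
      set c : ℂ := ∑ u : G, extZero (linStab L hL lam ⊓ N) ψlam u * (starRingEnd ℂ) (extZero (linStab L hL lam ⊓ N) ψlam u) with hcdef
      have hfac : ((Nat.card N : ℂ) * (Nat.card ↥(linStab L hL lam ⊓ N) : ℂ)⁻¹) ≠ 0 :=
        mul_ne_zero (aux_card_ne_zero N) (inv_ne_zero (aux_card_ne_zero (linStab L hL lam ⊓ N)))
      have e_cross : ∑ u : G, extZero (linStab L hL lam ⊓ N) θ u * (starRingEnd ℂ) (extZero (linStab L hL lam ⊓ N) ψlam u) = c := by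
        have h := hLHSeq
        rw [hmackey1, hmackey2] at h
        rw [mul_assoc, mul_assoc] at h
        exact mul_left_cancel₀ hfac (by rw [← mul_assoc, ← mul_assoc] at h; exact h)
      have e_self : ∑ u : G, extZero (linStab L hL lam ⊓ N) θ u * (starRingEnd ℂ) (extZero (linStab L hL lam ⊓ N) θ u) = c := by
        rw [hcdef]
        refine Fintype.sum_equiv (conjE s⁻¹) _ _ fun u => ?_
        simp only [conjE_apply, inv_inv]
        rw [hezθ u]
      have e_cross2 : ∑ u : G, extZero (linStab L hL lam ⊓ N) ψlam u * (starRingEnd ℂ) (extZero (linStab L hL lam ⊓ N) θ u) = c := by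
        have h1 : (starRingEnd ℂ) (∑ u : G, extZero (linStab L hL lam ⊓ N) θ u * (starRingEnd ℂ) (extZero (linStab L hL lam ⊓ N) ψlam u))
            = ∑ u : G, extZero (linStab L hL lam ⊓ N) ψlam u * (starRingEnd ℂ) (extZero (linStab L hL lam ⊓ N) θ u) := by
          rw [map_sum]
          refine Finset.sum_congr rfl fun u _ => ?_
          rw [map_mul, Complex.conj_conj]
          ring
        have h2 : (starRingEnd ℂ) c = c := by
          rw [hcdef, map_sum]
          refine Finset.sum_congr rfl fun u _ => ?_
          rw [map_mul, Complex.conj_conj]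
          ring
        rw [← h1, e_cross, h2]
      have hzero : ∀ u : G, extZero (linStab L hL lam ⊓ N) θ u = extZero (linStab L hL lam ⊓ N) ψlam u := by
        have hsum : ∑ u : G, (extZero (linStab L hL lam ⊓ N) θ u - extZero (linStab L hL lam ⊓ N) ψlam u) *
            (starRingEnd ℂ) (extZero (linStab L hL lam ⊓ N) θ u - extZero (linStab L hL lam ⊓ N) ψlam u) = 0 := by
          have e : ∀ u : G, (extZero (linStab L hL lam ⊓ N) θ u - extZero (linStab L hL lam ⊓ N) ψlam u) *
              (starRingEnd ℂ) (extZero (linStab L hL lam ⊓ N) θ u - extZero (linStab L hL lam ⊓ N) ψlam u)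
              = extZero (linStab L hL lam ⊓ N) θ u * (starRingEnd ℂ) (extZero (linStab L hL lam ⊓ N) θ u)
                - extZero (linStab L hL lam ⊓ N) θ u * (starRingEnd ℂ) (extZero (linStab L hL lam ⊓ N) ψlam u)
                - extZero (linStab L hL lam ⊓ N) ψlam u * (starRingEnd ℂ) (extZero (linStab L hL lam ⊓ N) θ u)
                + extZero (linStab L hL lam ⊓ N) ψlam u * (starRingEnd ℂ) (extZero (linStab L hL lam ⊓ N) ψlam u) := by
            intro u
            rw [map_sub]
            ring
          rw [Finset.sum_congr rfl fun u _ => e u]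
          rw [Finset.sum_add_distrib, Finset.sum_sub_distrib, Finset.sum_sub_distrib]
          rw [e_self, e_cross, e_cross2, ← hcdef]
          ring
        have hterm : ∀ u : G, (extZero (linStab L hL lam ⊓ N) θ u - extZero (linStab L hL lam ⊓ N) ψlam u) *
            (starRingEnd ℂ) (extZero (linStab L hL lam ⊓ N) θ u - extZero (linStab L hL lam ⊓ N) ψlam u)
            = ((Complex.normSq (extZero (linStab L hL lam ⊓ N) θ u - extZero (linStab L hL lam ⊓ N) ψlam u) : ℝ) : ℂ) :=
          fun u => Complex.mul_conj _
        rw [Finset.sum_congr rfl fun u _ => hterm u] at hsum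
        have hreal : ∑ u : G, Complex.normSq (extZero (linStab L hL lam ⊓ N) θ u - extZero (linStab L hL lam ⊓ N) ψlam u) = 0 := by
          exact_mod_cast hsum
        intro u
        have h0 := (Finset.sum_eq_zero_iff_of_nonneg
          (fun u _ => Complex.normSq_nonneg _)).mp hreal u (Finset.mem_univ u)
        exact sub_eq_zero.mp (Complex.normSq_eq_zero.mp h0)
      have hstabmem : s ∈ stabSet (linStab L hL lam ⊓ N) ψlam :=
        ⟨fun x => hsM x, fun x => (hezθ x).symm.trans (hzero x)⟩
      refine Set.mem_mul.mpr ⟨s, ⟨hsT, hstabmem⟩, y, hyN, ?_⟩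
      rw [hsdef, inv_mul_cancel_right]
  · intro a b haT haS hbT hbS hab
    exact Subgroup.mem_inf.mpr ⟨mul_mem (inv_mem haT) hbT, hab⟩


end
end

section
/- Let G be a finite group, N ⊴ G, ψ ∈ Irr(N), and let K ⊴ G and L ⊴ G with K ≤ L ≤ N. If λ is a linear character of L lying under ψ and κ = λ_K is its restriction to K, then the κ-Clifford reduction followed by the λ-Clifford reduction equals the λ-Clifford reduction: G(κ,λ) = G(λ), N(κ,λ) = N(λ), and (ψ_κ)_λ = ψ_λ. -/
open scoped BigOperators Pointwise Classical

noncomputable section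

variable {G : Type}

/-! ### Auxiliary lemmas -/

section Aux

variable [Group G] [Fintype G]

lemma extZero_coe (H : Subgroup G) (φ : ↥H → ℂ) (x : ↥H) : extZero H φ ↑x = φ x := by
  simp [extZero]

lemma extZero_of_mem (H : Subgroup G) (φ : ↥H → ℂ) {g : G} (h : g ∈ H) :
    extZero H φ g = φ ⟨g, h⟩ := dif_pos h

lemma extZero_of_not_mem (H : Subgroup G) (φ : ↥H → ℂ) {g : G} (h : g ∉ H) :
    extZero H φ g = 0 := dif_neg h

lemma sum_ind (H : Subgroup G) (F : G → ℂ) :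
    ∑ x : G, (if x ∈ H then F x else 0) = ∑ x : ↥H, F ↑x := by
  rw [← Finset.sum_filter]
  exact Finset.sum_subtype _ (fun x => by simp) F

lemma sum_ind_const (H : Subgroup G) (c : ℂ) :
    ∑ x : G, (if x ∈ H then c else 0) = (Nat.card H : ℂ) * c := by
  rw [sum_ind H (fun _ => c), Finset.sum_const, Nat.card_eq_fintype_card, nsmul_eq_mul,
    Finset.card_univ]

lemma card_ne_zero' (H : Subgroup G) : (Nat.card H : ℂ) ≠ 0 := by
  rw [Nat.card_eq_fintype_card]
  exact_mod_cast Fintype.card_ne_zero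

lemma sum_ind_reindex (H : Subgroup G) (e : G → G) (he : Function.Bijective e)
    (hmem : ∀ x, x ∈ H ↔ e x ∈ H) (F : G → ℂ) :
    ∑ x : G, (if x ∈ H then F (e x) else 0) = ∑ x : G, (if x ∈ H then F x else 0) := by
  refine Fintype.sum_bijective e he _ _ (fun x => ?_)
  by_cases hx : x ∈ H
  · simp [hx, (hmem x).1 hx]
  · have hex : e x ∉ H := fun h => hx ((hmem x).2 h)
    simp [hx, hex]

lemma sum_ind_mul_left (H : Subgroup G) {h : G} (hh : h ∈ H) (F : G → ℂ) :
    ∑ x : G, (if x ∈ H then F (h * x) else 0) = ∑ x : G, (if x ∈ H then F x else 0) :=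
  sum_ind_reindex H (fun x => h * x) (Equiv.mulLeft h).bijective
    (fun x => ⟨fun hx => mul_mem hh hx, fun hx => by
      have := mul_mem (inv_mem hh) hx; rwa [inv_mul_cancel_left] at this⟩) F

lemma sum_ind_mul_right (H : Subgroup G) {h : G} (hh : h ∈ H) (F : G → ℂ) :
    ∑ x : G, (if x ∈ H then F (x * h) else 0) = ∑ x : G, (if x ∈ H then F x else 0) :=
  sum_ind_reindex H (fun x => x * h) (Equiv.mulRight h).bijective
    (fun x => ⟨fun hx => mul_mem hx hh, fun hx => by
      have := mul_mem hx (inv_mem hh); rwa [mul_inv_cancel_right] at this⟩) F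

lemma sum_subgroupOf (M K : Subgroup G) (hKM : K ≤ M) (F : G → ℂ) :
    ∑ k : ↥(K.subgroupOf M), F (↑(↑k : ↥M)) = ∑ x : G, (if x ∈ K then F x else 0) := by
  rw [sum_ind]
  exact Fintype.sum_equiv (Subgroup.subgroupOfEquivOfLe hKM).toEquiv _ _ (fun k => rfl)

lemma indCharTo_vanish (M H : Subgroup G) (hHM : H ≤ M) (φ : ↥H → ℂ) {g : G} (hg : g ∉ M) :
    indCharTo M H φ g = 0 := by
  unfold indCharTo
  rw [Finset.sum_eq_zero, mul_zero]
  intro x _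
  by_cases hx : x ∈ M
  · rw [if_pos hx]
    refine extZero_of_not_mem H φ (fun hmem => hg ?_)
    have h2 : x⁻¹ * (x * g * x⁻¹) * x ∈ M := mul_mem (mul_mem (inv_mem hx) (hHM hmem)) hx
    rwa [show x⁻¹ * (x * g * x⁻¹) * x = g by group] at h2
  · rw [if_neg hx]

lemma extZero_indCharTo (M H : Subgroup G) (hHM : H ≤ M) (φ : ↥H → ℂ) :
    extZero M (fun m : ↥M => indCharTo M H φ ↑m) = indCharTo M H φ := by
  funext g
  by_cases hg : g ∈ M
  · rw [extZero_of_mem M _ hg]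
  · rw [extZero_of_not_mem M _ hg, indCharTo_vanish M H hHM φ hg]

lemma indCharTo_trans (N' M H : Subgroup G) (hHM : H ≤ M) (hMN : M ≤ N') (φ : ↥H → ℂ) :
    indCharTo N' M (fun m : ↥M => indCharTo M H φ ↑m) = indCharTo N' H φ := by
  funext g
  have key : ∑ x : G, (if x ∈ N' then indCharTo M H φ (x * g * x⁻¹) else 0)
      = (Nat.card M : ℂ) *
        ((Nat.card H : ℂ)⁻¹ * ∑ z : G, (if z ∈ N' then extZero H φ (z * g * z⁻¹) else 0)) := by
    have expand : ∀ x : G, indCharTo M H φ (x * g * x⁻¹)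
        = (Nat.card H : ℂ)⁻¹ *
          ∑ y : G, (if y ∈ M then extZero H φ ((y * x) * g * (y * x)⁻¹) else 0) := by
      intro x
      unfold indCharTo
      congr 1
      refine Finset.sum_congr rfl (fun y _ => ?_)
      by_cases hy : y ∈ M
      · rw [if_pos hy, if_pos hy]
        congr 1
        group
      · rw [if_neg hy, if_neg hy]
    calc ∑ x : G, (if x ∈ N' then indCharTo M H φ (x * g * x⁻¹) else 0)
        = ∑ x : G, ∑ y : G, (if x ∈ N' then
            (if y ∈ M then (Nat.card H : ℂ)⁻¹ * extZero H φ ((y * x) * g * (y * x)⁻¹) else 0)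
            else 0) := by
          refine Finset.sum_congr rfl (fun x _ => ?_)
          by_cases hx : x ∈ N'
          · rw [if_pos hx, expand x, Finset.mul_sum]
            refine Finset.sum_congr rfl (fun y _ => ?_)
            by_cases hy : y ∈ M <;> simp [hx, hy]
          · simp [hx]
      _ = ∑ y : G, ∑ x : G, (if y ∈ M then
            (if x ∈ N' then (Nat.card H : ℂ)⁻¹ * extZero H φ ((y * x) * g * (y * x)⁻¹) else 0)
            else 0) := by
          rw [Finset.sum_comm]
          refine Finset.sum_congr rfl (fun y _ => Finset.sum_congr rfl (fun x _ => ?_))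
          by_cases h1 : x ∈ N' <;> by_cases h2 : y ∈ M <;> simp [h1, h2]
      _ = ∑ y : G, (if y ∈ M then
            ∑ x : G, (if x ∈ N' then (Nat.card H : ℂ)⁻¹ * extZero H φ ((y * x) * g * (y * x)⁻¹)
              else 0) else 0) := by
          refine Finset.sum_congr rfl (fun y _ => ?_)
          by_cases hy : y ∈ M <;> simp [hy]
      _ = ∑ y : G, (if y ∈ M then
            (Nat.card H : ℂ)⁻¹ * ∑ z : G, (if z ∈ N' then extZero H φ (z * g * z⁻¹) else 0)
            else 0) := by
          refine Finset.sum_congr rfl (fun y _ => ?_)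
          by_cases hy : y ∈ M
          · rw [if_pos hy, if_pos hy,
              ← sum_ind_mul_left N' (hMN hy) (fun t => extZero H φ (t * g * t⁻¹)),
              Finset.mul_sum]
            refine Finset.sum_congr rfl (fun x _ => ?_)
            by_cases hx : x ∈ N' <;> simp [hx]
          · simp [hy]
      _ = (Nat.card M : ℂ) *
            ((Nat.card H : ℂ)⁻¹ * ∑ z : G, (if z ∈ N' then extZero H φ (z * g * z⁻¹) else 0)) :=
          sum_ind_const M _
  show (Nat.card M : ℂ)⁻¹ * ∑ x : G,
      (if x ∈ N' then extZero M (fun m : ↥M => indCharTo M H φ ↑m) (x * g * x⁻¹) else 0) = _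
  rw [show ∑ x : G, (if x ∈ N' then extZero M (fun m : ↥M => indCharTo M H φ ↑m) (x * g * x⁻¹)
        else 0) = ∑ x : G, (if x ∈ N' then indCharTo M H φ (x * g * x⁻¹) else 0) from
    Finset.sum_congr rfl (fun x _ => by
      rw [extZero_indCharTo M H hHM φ]), key, inv_mul_cancel_left₀ (card_ne_zero' M)]
  rfl

lemma indCharTo_conjinv (M H : Subgroup G) (φ : ↥H → ℂ) {z : G} (hz : z ∈ M) (w : G) :
    indCharTo M H φ (z * w * z⁻¹) = indCharTo M H φ w := by
  unfold indCharTo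
  congr 1
  calc ∑ x : G, (if x ∈ M then extZero H φ (x * (z * w * z⁻¹) * x⁻¹) else 0)
      = ∑ x : G, (if x ∈ M then extZero H φ ((x * z) * w * (x * z)⁻¹) else 0) := by
        refine Finset.sum_congr rfl (fun x _ => ?_)
        by_cases hx : x ∈ M
        · rw [if_pos hx, if_pos hx]; congr 1; group
        · simp [hx]
    _ = ∑ x : G, (if x ∈ M then extZero H φ (x * w * x⁻¹) else 0) :=
        sum_ind_mul_right M hz (fun t => extZero H φ (t * w * t⁻¹))

lemma lam_mul_conj (L : Subgroup G) (lam : G → ℂ) (hlin : IsLinOn L lam) {k : G} (hk : k ∈ L) :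
    lam k * (starRingEnd ℂ) (lam k) = 1 := by
  have hpow : ∀ n : ℕ, lam (k ^ n) = lam k ^ n := by
    intro n
    induction n with
    | zero => simpa using hlin.1
    | succ n ih => rw [pow_succ, pow_succ, hlin.2 _ (pow_mem hk n) _ hk, ih]
  have hord : lam k ^ orderOf k = 1 := by
    rw [← hpow, pow_orderOf_eq_one, hlin.1]
  have habs : ‖lam k‖ = 1 :=
    Complex.norm_eq_one_of_pow_eq_one hord (orderOf_pos k).ne'
  rw [Complex.mul_conj, Complex.normSq_eq_norm_sq, habs]
  norm_num

lemma lam_ne_zero (L : Subgroup G) (lam : G → ℂ) (hlin : IsLinOn L lam) {k : G} (hk : k ∈ L) :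
    lam k ≠ 0 := by
  intro h0
  have := lam_mul_conj L lam hlin hk
  rw [h0, zero_mul] at this
  exact zero_ne_one this

lemma twist_sum (L K : Subgroup G) (lam : G → ℂ) (hlin : IsLinOn L lam) (hKL : K ≤ L)
    (hKnorm : K.Normal) {z : G} (hz : ∃ k ∈ K, lam (z * k * z⁻¹) ≠ lam k) :
    ∑ k : G, (if k ∈ K then lam k * (starRingEnd ℂ) (lam (z * k * z⁻¹)) else 0) = 0 := by
  obtain ⟨k₀, hk₀, hnek₀⟩ := hz
  set μ : G → ℂ := fun k => lam k * (starRingEnd ℂ) (lam (z * k * z⁻¹)) with hμ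
  have hzkL : ∀ k ∈ K, z * k * z⁻¹ ∈ L := fun k hk => hKL (hKnorm.conj_mem k hk z)
  have hμmul : ∀ k ∈ K, μ (k₀ * k) = μ k₀ * μ k := by
    intro k hk
    have h1 : lam (k₀ * k) = lam k₀ * lam k := hlin.2 _ (hKL hk₀) _ (hKL hk)
    have h2 : z * (k₀ * k) * z⁻¹ = (z * k₀ * z⁻¹) * (z * k * z⁻¹) := by group
    simp only [hμ, h1, h2, hlin.2 _ (hzkL k₀ hk₀) _ (hzkL k hk), map_mul]
    ring
  have hμk₀ : μ k₀ ≠ 1 := by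
    intro h1
    apply hnek₀
    have h2 : lam (z * k₀ * z⁻¹) * (starRingEnd ℂ) (lam (z * k₀ * z⁻¹)) = 1 :=
      lam_mul_conj L lam hlin (hzkL k₀ hk₀)
    have h3 : (starRingEnd ℂ) (lam (z * k₀ * z⁻¹)) ≠ 0 := by
      intro h0
      rw [h0, mul_zero] at h2
      exact zero_ne_one h2
    have := h1.trans h2.symm
    exact (mul_right_cancel₀ h3 this).symm
  set S := ∑ k : G, (if k ∈ K then μ k else 0) with hS
  have hrec : S = μ k₀ * S := by
    calc S = ∑ k : G, (if k ∈ K then μ (k₀ * k) else 0) :=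
          (sum_ind_mul_left K hk₀ μ).symm
      _ = ∑ k : G, (if k ∈ K then μ k₀ * μ k else 0) := by
          refine Finset.sum_congr rfl (fun k _ => ?_)
          by_cases hk : k ∈ K
          · rw [if_pos hk, if_pos hk, hμmul k hk]
          · simp [hk]
      _ = μ k₀ * S := by
          rw [hS, Finset.mul_sum]
          refine Finset.sum_congr rfl (fun k _ => ?_)
          by_cases hk : k ∈ K <;> simp [hk]
  have hz0 : (μ k₀ - 1) * S = 0 := by
    rw [sub_mul, one_mul, ← hrec, sub_self]
  rcases mul_eq_zero.1 hz0 with h | h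
  · exact absurd (sub_eq_zero.1 h) hμk₀
  · exact h

/-- Schur-type homogeneity: an irreducible character lying over an invariant linear
character `μ` of a normal subgroup `K'` is `μ`-homogeneous. -/
lemma homog_of_irr {X : Type} [Group X] [Fintype X] (K' : Subgroup X) (hK' : K'.Normal)
    (μ : X → ℂ) (hmul : ∀ a ∈ K', ∀ b ∈ K', μ (a * b) = μ a * μ b)
    (hconj : ∀ k ∈ K', μ k * (starRingEnd ℂ) (μ k) = 1)
    (hinv : ∀ (x : X), ∀ k ∈ K', μ (x⁻¹ * k * x) = μ k)
    (χ : X → ℂ) (hχ : IsIrrChar X χ)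
    (hne : ∑ k : ↥K', χ ↑k * (starRingEnd ℂ) (μ ↑k) ≠ 0) :
    ∀ k ∈ K', ∀ m : X, χ (k * m) = μ k * χ m := by
  classical
  obtain ⟨V, hs, hchar⟩ := hχ
  haveI := hs
  set T : V →ₗ[ℂ] V := ∑ k : ↥K', (starRingEnd ℂ) (μ ↑k) • (V.ρ (↑k : X)) with hT
  have hTapp : ∀ v : V, T v = ∑ k : ↥K', (starRingEnd ℂ) (μ ↑k) • (V.ρ (↑k : X)) v := by
    intro v
    rw [hT, LinearMap.sum_apply]
    refine Finset.sum_congr rfl (fun k _ => ?_)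
    rw [LinearMap.smul_apply]
  have hcomm : ∀ x : X, T ∘ₗ V.ρ x = V.ρ x ∘ₗ T := by
    intro x
    apply LinearMap.ext
    intro v
    let e : ↥K' ≃ ↥K' :=
      ⟨fun k => ⟨x⁻¹ * ↑k * x, by simpa using hK'.conj_mem ↑k k.2 x⁻¹⟩,
       fun k => ⟨x * ↑k * x⁻¹, hK'.conj_mem ↑k k.2 x⟩,
       fun k => Subtype.ext (by simp [mul_assoc]),
       fun k => Subtype.ext (by simp [mul_assoc])⟩
    calc (T ∘ₗ V.ρ x) v = ∑ k : ↥K', (starRingEnd ℂ) (μ ↑k) • (V.ρ ((↑k : X) * x)) v := by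
          rw [LinearMap.comp_apply, hTapp]
          refine Finset.sum_congr rfl (fun k _ => ?_)
          rw [map_mul, Module.End.mul_apply]
      _ = ∑ k : ↥K', (starRingEnd ℂ) (μ ↑k) • (V.ρ (x * ↑k)) v := by
          refine Fintype.sum_equiv e _ _ (fun k => ?_)
          have h1 : μ (↑(e k) : X) = μ ↑k := by
            show μ (x⁻¹ * ↑k * x) = μ ↑k
            exact hinv x ↑k k.2
          have h2 : (x : X) * ↑(e k) = ↑k * x := by
            show x * (x⁻¹ * ↑k * x) = ↑k * x
            group
          rw [h1, h2]
      _ = (V.ρ x ∘ₗ T) v := by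
          rw [LinearMap.comp_apply, hTapp, map_sum]
          refine Finset.sum_congr rfl (fun k _ => ?_)
          rw [map_smul, map_mul, Module.End.mul_apply]
  obtain ⟨c, hc⟩ : ∃ c : ℂ, ∀ v : V, T v = c • v := by
    let f : V ⟶ V := ⟨FGModuleCat.ofHom T, by
      intro g
      ext v
      exact LinearMap.congr_fun (hcomm g) v⟩
    obtain ⟨c, hceq⟩ := CategoryTheory.endomorphism_simple_eq_smul_id ℂ f
    refine ⟨c, fun v => ?_⟩
    have := congrArg (fun (g : V ⟶ V) => g.hom v) hceq
    exact this.symm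
  have htrT : LinearMap.trace ℂ V T = ∑ k : ↥K', χ ↑k * (starRingEnd ℂ) (μ ↑k) := by
    rw [hT, map_sum]
    refine Finset.sum_congr rfl (fun k _ => ?_)
    rw [map_smul, smul_eq_mul, mul_comm]
    congr 1
    rw [← hchar]
    rfl
  have hcne : c ≠ 0 := by
    intro h0
    apply hne
    rw [← htrT]
    have hT0 : T = 0 := by
      apply LinearMap.ext
      intro v
      rw [hc v, h0, zero_smul]
      rfl
    rw [hT0, map_zero]
  intro k₀ hk₀ m
  -- `T ∘ V.ρ k₀ = μ k₀ • T`
  have hTk : ∀ v : V, T ((V.ρ k₀) v) = μ k₀ • T v := by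
    intro v
    let e : ↥K' ≃ ↥K' :=
      ⟨fun k => ⟨↑k * k₀, mul_mem k.2 hk₀⟩,
       fun k => ⟨↑k * k₀⁻¹, mul_mem k.2 (inv_mem hk₀)⟩,
       fun k => Subtype.ext (by simp [mul_assoc]),
       fun k => Subtype.ext (by simp [mul_assoc])⟩
    calc T ((V.ρ k₀) v) = ∑ k : ↥K', (starRingEnd ℂ) (μ ↑k) • (V.ρ ((↑k : X) * k₀)) v := by
          rw [hTapp]
          refine Finset.sum_congr rfl (fun k _ => ?_)
          rw [map_mul, Module.End.mul_apply]
      _ = ∑ k : ↥K', (μ k₀ * (starRingEnd ℂ) (μ ↑k)) • (V.ρ (↑k : X)) v := by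
          refine Fintype.sum_equiv e _ _ (fun k => ?_)
          have h1 : (↑(e k) : X) = ↑k * k₀ := rfl
          rw [h1, hmul _ k.2 _ hk₀, map_mul]
          congr 1
          have h3 := hconj k₀ hk₀
          calc (starRingEnd ℂ) (μ ↑k)
              = (starRingEnd ℂ) (μ ↑k) * (μ k₀ * (starRingEnd ℂ) (μ k₀)) := by
                rw [h3, mul_one]
            _ = μ k₀ * ((starRingEnd ℂ) (μ ↑k) * (starRingEnd ℂ) (μ k₀)) := by ring
            _ = μ k₀ * (starRingEnd ℂ) (μ ↑k * μ k₀) := by rw [map_mul]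
      _ = μ k₀ • T v := by
          rw [hTapp, Finset.smul_sum]
          refine Finset.sum_congr rfl (fun k _ => ?_)
          rw [smul_smul]
  have hρk₀ : ∀ v : V, (V.ρ k₀) v = μ k₀ • v := by
    intro v
    have h1 : c • ((V.ρ k₀) v) = c • (μ k₀ • v) := by
      rw [← hc ((V.ρ k₀) v), hTk v, hc v, smul_comm]
    exact smul_right_injective _ hcne h1
  have hρeq : V.ρ (k₀ * m) = μ k₀ • V.ρ m := by
    apply LinearMap.ext
    intro v
    rw [map_mul, Module.End.mul_apply, hρk₀, LinearMap.smul_apply]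
  calc χ (k₀ * m) = LinearMap.trace ℂ V (V.ρ (k₀ * m)) := by rw [← hchar]; rfl
    _ = μ k₀ * LinearMap.trace ℂ V (V.ρ m) := by rw [hρeq, map_smul, smul_eq_mul]
    _ = μ k₀ * χ m := by rw [← hchar]; rfl

/-- Homogeneity of an irreducible character of a subgroup `M` over an `M`-invariant linear
character `lam` of `K ≤ M`, expressed at the level of `G`. -/
lemma homog_ext (M K : Subgroup G) (hKM : K ≤ M) (hKnorm : K.Normal) (lam : G → ℂ)
    (L : Subgroup G) (hKL : K ≤ L) (hlin : IsLinOn L lam)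
    (hstabM : ∀ x ∈ M, ∀ k ∈ K, lam (x⁻¹ * k * x) = lam k)
    (φ : ↥M → ℂ) (hφ : IsIrrChar (↥M) φ)
    (hne : ∑ x : G, (if x ∈ K then extZero M φ x * (starRingEnd ℂ) (lam x) else 0) ≠ 0) :
    ∀ k ∈ K, ∀ w : G, extZero M φ (k * w) = lam k * extZero M φ w := by
  classical
  set K' : Subgroup ↥M := K.subgroupOf M with hK'
  have hcon : ∀ kk ∈ K', ∀ m : ↥M, φ (kk * m) = lam ↑kk * φ m := by
    refine homog_of_irr K' (hKnorm.subgroupOf M) (fun m => lam ↑m) ?_ ?_ ?_ φ hφ ?_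
    · intro a ha b hb
      exact hlin.2 _ (hKL (Subgroup.mem_subgroupOf.mp ha)) _ (hKL (Subgroup.mem_subgroupOf.mp hb))
    · intro k hk
      exact lam_mul_conj L lam hlin (hKL (Subgroup.mem_subgroupOf.mp hk))
    · intro x k hk
      exact hstabM ↑x x.2 ↑k (Subgroup.mem_subgroupOf.mp hk)
    · have hsum : ∑ k : ↥K', φ ↑k * (starRingEnd ℂ) (lam (↑(↑k : ↥M) : G))
          = ∑ x : G, (if x ∈ K then extZero M φ x * (starRingEnd ℂ) (lam x) else 0) := by
        rw [← sum_subgroupOf M K hKM (fun g => extZero M φ g * (starRingEnd ℂ) (lam g))]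
        refine Finset.sum_congr rfl (fun k _ => ?_)
        rw [extZero_coe]
      rw [hsum]
      exact hne
  intro k hk w
  by_cases hw : w ∈ M
  · have hkM : k ∈ M := hKM hk
    have hkw : k * w ∈ M := mul_mem hkM hw
    rw [extZero_of_mem M φ hkw, extZero_of_mem M φ hw]
    have hkk : (⟨k, hkM⟩ : ↥M) ∈ K' := Subgroup.mem_subgroupOf.mpr hk
    exact hcon ⟨k, hkM⟩ hkk ⟨w, hw⟩
  · have hkw : k * w ∉ M := by
      intro hmem
      apply hw
      have := mul_mem (inv_mem (hKM hk)) hmem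
      rwa [inv_mul_cancel_left] at this
    rw [extZero_of_not_mem M φ hkw, extZero_of_not_mem M φ hw, mul_zero]

lemma innerSub_ne (M K : Subgroup G) (hKM : K ≤ M) (lam : G → ℂ) (φ : ↥M → ℂ)
    (h : innerSub K (resTo K hKM φ) (fun x : ↥K => lam ↑x) ≠ 0) :
    ∑ x : G, (if x ∈ K then extZero M φ x * (starRingEnd ℂ) (lam x) else 0) ≠ 0 := by
  intro h0
  apply h
  unfold innerSub
  have hsum : ∑ x : G, extZero K (resTo K hKM φ) x *
      (starRingEnd ℂ) (extZero K (fun x : ↥K => lam ↑x) x)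
      = ∑ x : G, (if x ∈ K then extZero M φ x * (starRingEnd ℂ) (lam x) else 0) := by
    refine Finset.sum_congr rfl (fun x _ => ?_)
    by_cases hx : x ∈ K
    · rw [if_pos hx, extZero_of_mem K _ hx, extZero_of_mem K _ hx,
        extZero_of_mem M φ (hKM hx)]
      rfl
    · rw [if_neg hx, extZero_of_not_mem K _ hx, zero_mul]
  rw [hsum, h0, mul_zero]

/-- The key uniqueness statement: a class function of `M` supported on `M`, homogeneous over
the `M`-invariant linear character `lam` on `K`, which induces `0` on `N'`, is zero. -/
lemma unique_aux (N' M K : Subgroup G) (hMN : M ≤ N') (hKM : K ≤ M) (hKnorm : K.Normal)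
    (L : Subgroup G) (hKL : K ≤ L) (lam : G → ℂ) (hlin : IsLinOn L lam)
    (hstabout : ∀ z ∈ N', z ∉ M → ∃ k ∈ K, lam (z * k * z⁻¹) ≠ lam k)
    (f : G → ℂ)
    (hsupp : ∀ g, g ∉ M → f g = 0)
    (hcls : ∀ z ∈ M, ∀ u : G, f (z * u * z⁻¹) = f u)
    (hhom : ∀ k ∈ K, ∀ w : G, f (k * w) = lam k * f w)
    (hind : ∀ g : G, ∑ x : G, (if x ∈ N' then f (x * g * x⁻¹) else 0) = 0) :
    ∀ g, f g = 0 := by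
  classical
  set P : ℂ := ∑ u : G, (if u ∈ M then f u * (starRingEnd ℂ) (f u) else 0) with hPdef
  set S : G → ℂ := fun z => ∑ u : G, (if u ∈ M then f u * (starRingEnd ℂ) (f (z * u * z⁻¹)) else 0)
    with hSdef
  have hSzM : ∀ z ∈ M, S z = P := by
    intro z hz
    refine Finset.sum_congr rfl (fun u _ => ?_)
    by_cases hu : u ∈ M
    · rw [if_pos hu, if_pos hu, hcls z hz u]
    · simp [hu]
  have hSz0 : ∀ z ∈ N', z ∉ M → S z = 0 := by
    intro z hzN hzM
    have hc : ∑ k : G, (if k ∈ K then lam k * (starRingEnd ℂ) (lam (z * k * z⁻¹)) else 0) = 0 :=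
      twist_sum L K lam hlin hKL hKnorm (hstabout z hzN hzM)
    have hkey : (Nat.card K : ℂ) * S z
        = (∑ k : G, (if k ∈ K then lam k * (starRingEnd ℂ) (lam (z * k * z⁻¹)) else 0)) * S z := by
      calc (Nat.card K : ℂ) * S z = ∑ k : G, (if k ∈ K then S z else 0) :=
            (sum_ind_const K (S z)).symm
        _ = ∑ k : G, (if k ∈ K then
              (lam k * (starRingEnd ℂ) (lam (z * k * z⁻¹))) * S z else 0) := by
            refine Finset.sum_congr rfl (fun k _ => ?_)
            by_cases hk : k ∈ K
            · rw [if_pos hk, if_pos hk]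
              have hstep : S z = ∑ u : G,
                  (if u ∈ M then f (k * u) * (starRingEnd ℂ) (f (z * (k * u) * z⁻¹)) else 0) :=
                (sum_ind_mul_left M (hKM hk)
                  (fun t => f t * (starRingEnd ℂ) (f (z * t * z⁻¹)))).symm
              calc S z = ∑ u : G,
                  (if u ∈ M then f (k * u) * (starRingEnd ℂ) (f (z * (k * u) * z⁻¹)) else 0) :=
                    hstep
                _ = (lam k * (starRingEnd ℂ) (lam (z * k * z⁻¹))) * S z := by
                    simp only [hSdef]
                    rw [Finset.mul_sum]
                    refine Finset.sum_congr rfl (fun u _ => ?_)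
                    by_cases hu : u ∈ M
                    · rw [if_pos hu, if_pos hu]
                      have e1 : f (k * u) = lam k * f u := hhom k hk u
                      have e2 : f (z * (k * u) * z⁻¹)
                          = lam (z * k * z⁻¹) * f (z * u * z⁻¹) := by
                        have h2 : z * (k * u) * z⁻¹ = (z * k * z⁻¹) * (z * u * z⁻¹) := by group
                        rw [h2, hhom _ (hKnorm.conj_mem k hk z)]
                      rw [e1, e2, map_mul]
                      ring
                    · simp [hu]
            · simp [hk]
        _ = (∑ k : G, (if k ∈ K then lam k * (starRingEnd ℂ) (lam (z * k * z⁻¹)) else 0)) * S z := by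
            rw [Finset.sum_mul]
            refine Finset.sum_congr rfl (fun k _ => ?_)
            by_cases hk : k ∈ K <;> simp [hk]
    rw [hc, zero_mul] at hkey
    exact (mul_eq_zero.1 hkey).resolve_left (card_ne_zero' K)
  have hDP : ∑ z : G, (if z ∈ N' then S z else 0) = (Nat.card M : ℂ) * P := by
    calc ∑ z : G, (if z ∈ N' then S z else 0) = ∑ z : G, (if z ∈ M then P else 0) := by
          refine Finset.sum_congr rfl (fun z _ => ?_)
          by_cases hzM : z ∈ M
          · rw [if_pos hzM, if_pos (hMN hzM), hSzM z hzM]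
          · rw [if_neg hzM]
            by_cases hzN : z ∈ N'
            · rw [if_pos hzN, hSz0 z hzN hzM]
            · rw [if_neg hzN]
      _ = (Nat.card M : ℂ) * P := sum_ind_const M P
  have hD0 : ∑ z : G, (if z ∈ N' then S z else 0) = 0 := by
    have hQ : ∀ z : G, (if z ∈ N' then S z else 0)
        = ∑ u : G, (if z ∈ N' then (if u ∈ N' then f u * (starRingEnd ℂ) (f (z * u * z⁻¹)) else 0)
            else 0) := by
      intro z
      by_cases hz : z ∈ N'
      · rw [if_pos hz]
        simp only [if_pos hz]
        refine Finset.sum_congr rfl (fun u _ => ?_)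
        by_cases huM : u ∈ M
        · rw [if_pos huM, if_pos (hMN huM)]
        · rw [if_neg huM]
          by_cases huN : u ∈ N'
          · rw [if_pos huN, hsupp u huM, zero_mul]
          · rw [if_neg huN]
      · simp [hz]
    calc ∑ z : G, (if z ∈ N' then S z else 0)
        = ∑ z : G, ∑ u : G, (if z ∈ N' then
            (if u ∈ N' then f u * (starRingEnd ℂ) (f (z * u * z⁻¹)) else 0) else 0) :=
          Finset.sum_congr rfl (fun z _ => hQ z)
      _ = ∑ u : G, ∑ z : G, (if z ∈ N' then
            (if u ∈ N' then f u * (starRingEnd ℂ) (f (z * u * z⁻¹)) else 0) else 0) :=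
          Finset.sum_comm
      _ = 0 := by
          refine Finset.sum_eq_zero (fun u _ => ?_)
          by_cases hu : u ∈ N'
          · calc ∑ z : G, (if z ∈ N' then
                  (if u ∈ N' then f u * (starRingEnd ℂ) (f (z * u * z⁻¹)) else 0) else 0)
                = f u * (starRingEnd ℂ) (∑ z : G, (if z ∈ N' then f (z * u * z⁻¹) else 0)) := by
                  rw [map_sum, Finset.mul_sum]
                  refine Finset.sum_congr rfl (fun z _ => ?_)
                  by_cases hz : z ∈ N' <;> simp [hz, hu]
              _ = 0 := by rw [hind u, map_zero, mul_zero]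
          · refine Finset.sum_eq_zero (fun z _ => ?_)
            by_cases hz : z ∈ N' <;> simp [hz, hu]
  have hP0 : P = 0 := by
    have := hDP.symm.trans hD0
    exact (mul_eq_zero.1 this).resolve_left (card_ne_zero' M)
  have hfM : ∀ u, u ∈ M → f u = 0 := by
    have hreal : ∑ u : G, (if u ∈ M then Complex.normSq (f u) else 0) = 0 := by
      have h1 : ((∑ u : G, (if u ∈ M then Complex.normSq (f u) else 0) : ℝ) : ℂ) = 0 := by
        rw [← hP0, hPdef]
        push_cast
        refine Finset.sum_congr rfl (fun u _ => ?_)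
        by_cases hu : u ∈ M <;> simp [hu, Complex.mul_conj]
      exact_mod_cast h1
    intro u huM
    have hterm := (Finset.sum_eq_zero_iff_of_nonneg (fun u _ => by
      split <;> simp [Complex.normSq_nonneg])).1 hreal u
      (Finset.mem_univ u)
    rw [if_pos huM] at hterm
    exact Complex.normSq_eq_zero.mp hterm
  intro g
  by_cases hg : g ∈ M
  · exact hfM g hg
  · exact hsupp g hg

lemma mem_linStab {L : Subgroup G} {hL : L.Normal} {lam : G → ℂ} {g : G} :
    g ∈ linStab L hL lam ↔ ∀ x ∈ L, lam (g⁻¹ * x * g) = lam x := Iff.rfl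

lemma linStab_conj {L : Subgroup G} {hL : L.Normal} {lam : G → ℂ} {g : G}
    (hg : g ∈ linStab L hL lam) : ∀ k ∈ L, lam (g * k * g⁻¹) = lam k := by
  intro k hk
  have := (inv_mem hg : g⁻¹ ∈ linStab L hL lam) k hk
  rwa [inv_inv] at this

end Aux

theorem stmt_10 [Group G] [Fintype G] (N : Subgroup G) (hN : N.Normal) (ψ : ↥N → ℂ)
    (hψ : IsIrrChar ↥N ψ) (K L : Subgroup G) (hK : K.Normal) (hL : L.Normal)
    (hKL : K ≤ L) (hLN : L ≤ N) (lam : G → ℂ) (hlin : IsLinOn L lam)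
    (hunder : innerSub L (resTo L hLN ψ) (fun x : ↥L => lam ↑x) ≠ 0)
    (hKsub : K ≤ linStab K hK lam ⊓ N) (hLsub : L ≤ linStab L hL lam ⊓ N) :
    (linStab K hK lam ⊓ linStab L hL lam = linStab L hL lam) ∧
    (linStab K hK lam ⊓ linStab L hL lam ⊓ N = linStab L hL lam ⊓ N) ∧
    (∀ ψκ : ↥(linStab K hK lam ⊓ N) → ℂ, IsIrrChar ↥(linStab K hK lam ⊓ N) ψκ →
      innerSub K (resTo K hKsub ψκ) (fun x : ↥K => lam ↑x) ≠ 0 →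
      indCharTo N (linStab K hK lam ⊓ N) ψκ = extZero N ψ →
      ∀ χ : ↥(linStab L hL lam ⊓ N) → ℂ, IsIrrChar ↥(linStab L hL lam ⊓ N) χ →
        innerSub L (resTo L hLsub χ) (fun x : ↥L => lam ↑x) ≠ 0 →
        (indCharTo (linStab K hK lam ⊓ N) (linStab L hL lam ⊓ N) χ =
            extZero (linStab K hK lam ⊓ N) ψκ ↔
          indCharTo N (linStab L hL lam ⊓ N) χ = extZero N ψ)) := by
  classical
  have hSLK : linStab L hL lam ≤ linStab K hK lam := by
    intro g hg x hx
    exact hg x (hKL hx)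
  set M : Subgroup G := linStab K hK lam ⊓ N with hMdef
  set H' : Subgroup G := linStab L hL lam ⊓ N with hHdef
  have hHM : H' ≤ M := inf_le_inf_right N hSLK
  have hMN : M ≤ N := inf_le_right
  have hKM : K ≤ M := hKsub
  have hLH : L ≤ H' := hLsub
  have hKH : K ≤ H' := hKL.trans hLsub
  have hstabM : ∀ x ∈ M, ∀ k ∈ K, lam (x⁻¹ * k * x) = lam k := by
    intro x hx k hk
    exact (Subgroup.mem_inf.mp hx).1 k hk
  have hstabH : ∀ x ∈ H', ∀ l ∈ L, lam (x⁻¹ * l * x) = lam l := by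
    intro x hx l hl
    exact (Subgroup.mem_inf.mp hx).1 l hl
  have hstabout : ∀ z ∈ N, z ∉ M → ∃ k ∈ K, lam (z * k * z⁻¹) ≠ lam k := by
    intro z hzN hzM
    have hzSK : z ∉ linStab K hK lam := fun h => hzM (Subgroup.mem_inf.mpr ⟨h, hzN⟩)
    rw [mem_linStab] at hzSK
    push_neg at hzSK
    obtain ⟨k, hk, hne⟩ := hzSK
    refine ⟨z⁻¹ * k * z, by simpa using hK.conj_mem k hk z⁻¹, ?_⟩
    rw [show z * (z⁻¹ * k * z) * z⁻¹ = k by group]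
    exact fun h => hne h.symm
  refine ⟨inf_eq_right.mpr hSLK, by rw [inf_eq_right.mpr hSLK], ?_⟩
  intro ψκ hψκ hψκunder hind χ hχirr hχunder
  have hhomψκ : ∀ k ∈ K, ∀ w : G, extZero M ψκ (k * w) = lam k * extZero M ψκ w :=
    homog_ext M K hKsub hK lam L hKL hlin hstabM ψκ hψκ
      (innerSub_ne M K hKsub lam ψκ hψκunder)
  have hhomχ : ∀ l ∈ L, ∀ w : G, extZero H' χ (l * w) = lam l * extZero H' χ w :=
    homog_ext H' L hLsub hL lam L (le_refl L) hlin hstabH χ hχirr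
      (innerSub_ne H' L hLsub lam χ hχunder)
  have hhomθ : ∀ k ∈ K, ∀ w : G, indCharTo M H' χ (k * w) = lam k * indCharTo M H' χ w := by
    intro k hk w
    have hsum : ∑ x : G, (if x ∈ M then extZero H' χ (x * (k * w) * x⁻¹) else 0)
        = lam k * ∑ x : G, (if x ∈ M then extZero H' χ (x * w * x⁻¹) else 0) := by
      rw [Finset.mul_sum]
      refine Finset.sum_congr rfl (fun x _ => ?_)
      by_cases hx : x ∈ M
      · rw [if_pos hx, if_pos hx, show x * (k * w) * x⁻¹ = (x * k * x⁻¹) * (x * w * x⁻¹) by group,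
          hhomχ _ (hKL (hK.conj_mem k hk x)) _,
          linStab_conj (Subgroup.mem_inf.mp hx).1 k hk]
      · simp [hx]
    show (Nat.card H' : ℂ)⁻¹ * ∑ x : G, (if x ∈ M then extZero H' χ (x * (k * w) * x⁻¹) else 0)
        = lam k * ((Nat.card H' : ℂ)⁻¹ *
            ∑ x : G, (if x ∈ M then extZero H' χ (x * w * x⁻¹) else 0))
    rw [hsum]
    ring
  have hclsψκ : ∀ z ∈ M, ∀ u : G, extZero M ψκ (z * u * z⁻¹) = extZero M ψκ u := by
    intro z hz u
    by_cases hu : u ∈ M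
    · have hzu : z * u * z⁻¹ ∈ M := mul_mem (mul_mem hz hu) (inv_mem hz)
      rw [extZero_of_mem M ψκ hzu, extZero_of_mem M ψκ hu]
      obtain ⟨V, hs, hchar⟩ := hψκ
      have heq : (⟨z * u * z⁻¹, hzu⟩ : ↥M) = ⟨z, hz⟩ * ⟨u, hu⟩ * (⟨z, hz⟩)⁻¹ :=
        Subtype.ext rfl
      rw [heq, ← hchar, FDRep.char_conj]
    · have hzu : z * u * z⁻¹ ∉ M := by
        intro hmem
        apply hu
        have h2 : z⁻¹ * (z * u * z⁻¹) * z ∈ M := mul_mem (mul_mem (inv_mem hz) hmem) hz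
        rwa [show z⁻¹ * (z * u * z⁻¹) * z = u by group] at h2
      rw [extZero_of_not_mem M ψκ hzu, extZero_of_not_mem M ψκ hu]
  constructor
  · intro ha
    have hφM : (fun m : ↥M => indCharTo M H' χ ↑m) = ψκ := by
      funext m
      rw [show indCharTo M H' χ ↑m = extZero M ψκ ↑m from congrFun ha ↑m, extZero_coe]
    calc indCharTo N H' χ = indCharTo N M (fun m : ↥M => indCharTo M H' χ ↑m) :=
          (indCharTo_trans N M H' hHM hMN χ).symm
      _ = indCharTo N M ψκ := by rw [hφM]
      _ = extZero N ψ := hind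
  · intro hb
    set f : G → ℂ := fun g => indCharTo M H' χ g - extZero M ψκ g with hf
    have hind0 : ∀ g : G, ∑ x : G, (if x ∈ N then f (x * g * x⁻¹) else 0) = 0 := by
      intro g
      have h1 : indCharTo N M (fun m : ↥M => indCharTo M H' χ ↑m) g = indCharTo N M ψκ g := by
        rw [indCharTo_trans N M H' hHM hMN χ, hb, hind]
      have h2 : (Nat.card M : ℂ)⁻¹ * ∑ x : G, (if x ∈ N then
            extZero M (fun m : ↥M => indCharTo M H' χ ↑m) (x * g * x⁻¹) else 0)
          = (Nat.card M : ℂ)⁻¹ * ∑ x : G, (if x ∈ N then extZero M ψκ (x * g * x⁻¹) else 0) := h1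
      have h3 := mul_left_cancel₀ (inv_ne_zero (card_ne_zero' M)) h2
      rw [extZero_indCharTo M H' hHM χ] at h3
      calc ∑ x : G, (if x ∈ N then f (x * g * x⁻¹) else 0)
          = ∑ x : G, ((if x ∈ N then indCharTo M H' χ (x * g * x⁻¹) else 0)
              - (if x ∈ N then extZero M ψκ (x * g * x⁻¹) else 0)) := by
            refine Finset.sum_congr rfl (fun x _ => ?_)
            by_cases hx : x ∈ N <;> simp [hx, hf]
        _ = 0 := by rw [Finset.sum_sub_distrib, h3, sub_self]
    have hsupp : ∀ g, g ∉ M → f g = 0 := by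
      intro g hg
      simp only [hf]
      rw [indCharTo_vanish M H' hHM χ hg, extZero_of_not_mem M ψκ hg, sub_zero]
    have hcls : ∀ z ∈ M, ∀ u : G, f (z * u * z⁻¹) = f u := by
      intro z hz u
      simp only [hf]
      rw [indCharTo_conjinv M H' χ hz u, hclsψκ z hz u]
    have hhomf : ∀ k ∈ K, ∀ w : G, f (k * w) = lam k * f w := by
      intro k hk w
      simp only [hf]
      rw [hhomθ k hk w, hhomψκ k hk w, mul_sub]
    have hzero : ∀ g, f g = 0 :=
      unique_aux N M K hMN hKsub hK L hKL lam hlin hstabout f hsupp hcls hhomf hind0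
    funext g
    exact sub_eq_zero.mp (hzero g)

end
end

section
/- Let G be a finite group, N ⊴ G, ψ ∈ Irr(N), Z = Z(ψ^G), ζ its central character, and suppose that N/Z is nilpotent and that Z contains every normal subgroup L of G with L ≤ N and [L,L] ≤ Ker(ψ^G) (i.e., the triple (G,N,ψ) is linearly irreducible). Then N/Z is abelian. -/
open scoped BigOperators Pointwise Classical

noncomputable section

variable {G : Type}

section AuxLemmas
open Polynomial Matrix


/-! ### Auxiliary lemmas -/

private lemma ms_nonneg_zero (s : Multiset ℝ) (h0 : ∀ x ∈ s, 0 ≤ x) (hs : s.sum = 0) :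
    ∀ x ∈ s, x = 0 := by
  induction s using Multiset.induction with
  | empty => simp
  | cons a t ih =>
    have hat : 0 ≤ a := h0 a (Multiset.mem_cons_self a t)
    have hts : 0 ≤ t.sum := Multiset.sum_nonneg (fun x hx => h0 x (Multiset.mem_cons_of_mem hx))
    rw [Multiset.sum_cons] at hs
    have ha : a = 0 := by linarith
    have ht : t.sum = 0 := by linarith
    intro x hx
    rcases Multiset.mem_cons.mp hx with h | h
    · exact h ▸ ha
    · exact ih (fun y hy => h0 y (Multiset.mem_cons_of_mem hy)) ht x h

private lemma re_eq_abs_imp {w : ℂ} (h : w.re = ‖w‖) : w = (‖w‖ : ℂ) := by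
  have h2 : w.im = 0 := by
    have := Complex.sq_norm w
    rw [Complex.normSq_apply, ← h] at this
    nlinarith
  rw [Complex.ext_iff]
  exact ⟨by simpa using h, by simpa using h2⟩

private lemma eq_one_of_re_eq_one {w : ℂ} (habs : ‖w‖ = 1) (hre : w.re = 1) : w = 1 := by
  have := re_eq_abs_imp (w := w) (by rw [habs, hre])
  rw [habs] at this; simpa using this

private lemma ms_all_eq (s : Multiset ℂ) (h1 : ∀ x ∈ s, ‖x‖ = 1)
    (h2 : ‖s.sum‖ = s.card) (hc : s.card ≠ 0) :
    ∀ x ∈ s, x = s.sum / s.card := by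
  have hT : ‖s.sum‖ ≠ 0 := by rw [h2]; exact_mod_cast hc
  set T := s.sum with hTdef
  set u : ℂ := T / (‖T‖ : ℂ) with hu
  have huabs : ‖u‖ = 1 := by rw [hu, norm_div]; simp [hT]
  have hTu : (T * (starRingEnd ℂ) u).re = ‖T‖ := by
    have e0 : T * (starRingEnd ℂ) u = (Complex.normSq T : ℂ) / (‖T‖ : ℂ) := by
      rw [hu]
      rw [map_div₀, div_eq_mul_inv, ← mul_assoc, Complex.mul_conj]
      simp
      exact (div_eq_mul_inv _ _).symm
    rw [e0]
    rw [show ((Complex.normSq T : ℂ)/(‖T‖ : ℂ)) = ((Complex.normSq T / ‖T‖ : ℝ) : ℂ) by push_cast; ring]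
    rw [Complex.ofReal_re, Complex.normSq_eq_norm_sq, sq, mul_div_assoc, div_self hT, mul_one]
  have hsum : (s.map (fun x => (1 : ℝ) - (x * (starRingEnd ℂ) u).re)).sum = 0 := by
    have e1 : (s.map (fun x => (1 : ℝ) - (x * (starRingEnd ℂ) u).re)).sum
        = (s.map (fun _ => (1:ℝ))).sum - (s.map (fun x => (x * (starRingEnd ℂ) u).re)).sum := by
      rw [← Multiset.sum_map_sub]
    have e2 : (s.map (fun x => (x * (starRingEnd ℂ) u).re)).sum
        = (T * (starRingEnd ℂ) u).re := by
      rw [show (fun x : ℂ => (x * (starRingEnd ℂ) u).re)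
          = (Complex.reAddGroupHom.comp (AddMonoidHom.mulRight ((starRingEnd ℂ) u))) from rfl]
      rw [← AddMonoidHom.map_multiset_sum]
      rfl
    rw [e1, e2, hTu, h2]
    simp
  have key := ms_nonneg_zero _ (by
      intro y hy
      rcases Multiset.mem_map.mp hy with ⟨x, hx, rfl⟩
      have : (x * (starRingEnd ℂ) u).re ≤ 1 := by
        calc (x * (starRingEnd ℂ) u).re ≤ ‖(x * (starRingEnd ℂ) u)‖ := Complex.re_le_norm _
        _ = 1 := by rw [norm_mul]; simp [h1 x hx, huabs]
      linarith) hsum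
  intro x hx
  have h3 : (1:ℝ) - (x * (starRingEnd ℂ) u).re = 0 :=
    key _ (Multiset.mem_map_of_mem _ hx)
  have h4 : x * (starRingEnd ℂ) u = 1 := by
    apply eq_one_of_re_eq_one
    · rw [norm_mul]; simp [h1 x hx, huabs]
    · linarith
  have h5 : x = u := by
    have hcu : (starRingEnd ℂ) u * u = 1 := by
      rw [mul_comm, Complex.mul_conj]
      rw [Complex.normSq_eq_norm_sq, huabs]
      simp
    calc x = x * ((starRingEnd ℂ) u * u) := by rw [hcu, mul_one]
      _ = u := by rw [← mul_assoc, h4, one_mul]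
  rw [h5, hu, h2, hTdef]
  norm_cast

private lemma ms_abs_sum_le (s : Multiset ℂ) : ‖s.sum‖ ≤ (s.map (fun x => ‖x‖)).sum := by
  induction s using Multiset.induction with
  | empty => simp
  | cons a t ih =>
    simp only [Multiset.sum_cons, Multiset.map_cons]
    exact le_trans (norm_add_le _ _) (by linarith)

private lemma eval_charpoly' {m : ℕ} (M : Matrix (Fin m) (Fin m) ℂ) (μ : ℂ) :
    (M.charpoly).eval μ = (μ • (1 : Matrix (Fin m) (Fin m) ℂ) - M).det := by
  rw [Matrix.charpoly, ← Polynomial.coe_evalRingHom, RingHom.map_det]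
  congr 1
  ext i j
  by_cases h : i = j <;>
    simp [Matrix.charmatrix_apply, Matrix.map_apply, Matrix.sub_apply, Matrix.smul_apply,
      Matrix.one_apply, Matrix.diagonal_apply, h]

private lemma charpoly_root_pow {m k : ℕ} (M : Matrix (Fin m) (Fin m) ℂ)
    (hM : M ^ k = 1) : ∀ μ ∈ M.charpoly.roots, μ ^ k = 1 := by
  intro μ hμ
  have hroot : (M.charpoly).IsRoot μ := (Polynomial.mem_roots (M.charpoly_monic.ne_zero)).mp hμ
  have hdet : (μ • (1 : Matrix (Fin m) (Fin m) ℂ) - M).det = 0 := by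
    rw [← eval_charpoly']; exact hroot
  obtain ⟨v, hv0, hv⟩ := (Matrix.exists_mulVec_eq_zero_iff).mpr hdet
  have hMv : M.mulVec v = μ • v := by
    have := hv
    rw [Matrix.sub_mulVec, sub_eq_zero] at this
    rw [← this, Matrix.smul_mulVec, Matrix.one_mulVec]
  have hpow : ∀ j : ℕ, (M ^ j).mulVec v = μ ^ j • v := by
    intro j
    induction j with
    | zero => simp [Matrix.one_mulVec]
    | succ n ih =>
      rw [pow_succ, pow_succ, ← Matrix.mulVec_mulVec, hMv, Matrix.mulVec_smul, ih, smul_smul, mul_comm]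
  have h1 : μ ^ k • v = v := by rw [← hpow, hM, Matrix.one_mulVec]
  obtain ⟨i, hi⟩ := Function.ne_iff.mp hv0
  have := congrFun h1 i
  simp only [Pi.smul_apply, smul_eq_mul] at this
  have hvi : v i ≠ 0 := by simpa using hi
  exact mul_right_cancel₀ hvi (by rw [one_mul]; exact this)

private lemma real_pow_eq_one {x : ℝ} {k : ℕ} (hx : 0 ≤ x) (hk : k ≠ 0) (h : x ^ k = 1) :
    x = 1 := by
  rcases lt_trichotomy x 1 with h1 | h1 | h1
  · have := pow_lt_one₀ hx h1 hk
    linarith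
  · exact h1
  · have := one_lt_pow₀ h1 hk
    linarith

private lemma charpoly_root_abs_one {m k : ℕ} (hk : k ≠ 0) (M : Matrix (Fin m) (Fin m) ℂ)
    (hM : M ^ k = 1) : ∀ μ ∈ M.charpoly.roots, ‖μ‖ = 1 := by
  intro μ hμ
  have h1 : ‖μ‖ ^ k = 1 := by
    rw [← norm_pow, charpoly_root_pow M hM μ hμ]; simp
  exact real_pow_eq_one (norm_nonneg μ) hk h1

private lemma charpoly_roots_card {m : ℕ} (M : Matrix (Fin m) (Fin m) ℂ) :
    M.charpoly.roots.card = m := by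
  have := (Polynomial.splits_iff_card_roots).mp
    (IsAlgClosed.splits M.charpoly)
  rw [Matrix.charpoly_natDegree_eq_dim] at this
  simpa using this

private lemma matrix_abs_trace_le {m k : ℕ} (hk : k ≠ 0) (M : Matrix (Fin m) (Fin m) ℂ)
    (hM : M ^ k = 1) : ‖M.trace‖ ≤ m := by
  rw [Matrix.trace_eq_sum_roots_charpoly M]
  calc ‖M.charpoly.roots.sum‖ ≤ (M.charpoly.roots.map (fun x => ‖x‖)).sum :=
        ms_abs_sum_le _
    _ = ((M.charpoly.roots.map (fun _ => (1:ℝ)))).sum := by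
        rw [Multiset.map_congr rfl (charpoly_root_abs_one hk M hM)]
    _ = m := by
        rw [Multiset.map_const', Multiset.sum_replicate, charpoly_roots_card]
        simp

private lemma matrix_scalar_of_abs_trace {m k : ℕ} (hk : k ≠ 0) (hm : m ≠ 0)
    (M : Matrix (Fin m) (Fin m) ℂ) (hM : M ^ k = 1)
    (h : ‖M.trace‖ = m) : M = (M.trace / m) • 1 := by
  have hsum : M.trace = M.charpoly.roots.sum := Matrix.trace_eq_sum_roots_charpoly M
  have hcard := charpoly_roots_card M
  have hall : ∀ x ∈ M.charpoly.roots, x = M.trace / m := by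
    intro x hx
    have := ms_all_eq M.charpoly.roots (charpoly_root_abs_one hk M hM)
      (by rw [← hsum, h, hcard]) (by rw [hcard]; exact hm) x hx
    rw [this, ← hsum, hcard]
  set u : ℂ := M.trace / m with hu
  have hcp : M.charpoly = (X - C u) ^ m := by
    have heq := (IsAlgClosed.splits M.charpoly).eq_prod_roots_of_monic M.charpoly_monic
    have hmc : Multiset.map (fun a => X - C a) M.charpoly.roots
        = Multiset.map (fun _ => X - C u) M.charpoly.roots :=
      Multiset.map_congr rfl (fun x hx => by rw [hall x hx])
    rw [heq, hmc, Multiset.map_const', Multiset.prod_replicate, hcard]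
  have hint : IsIntegral ℂ M := ⟨X ^ k - C 1, monic_X_pow_sub_C 1 hk, by
    rw [eval₂_sub, eval₂_X_pow, eval₂_C, hM]; simp⟩
  have hdvd1 : minpoly ℂ M ∣ X ^ k - C 1 := minpoly.dvd _ _ (by
    simp only [map_sub, map_pow, aeval_X, aeval_C]
    rw [hM]; simp)
  have hsq : Squarefree ((X : ℂ[X]) ^ k - C 1) := by
    have hsep : ((X : ℂ[X]) ^ k - 1).Separable :=
      Polynomial.X_pow_sub_one_separable_iff.mpr (by exact_mod_cast hk)
    simpa using hsep.squarefree
  have hdvd2 : minpoly ℂ M ∣ (X - C u) ^ m := by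
    rw [← hcp]; exact minpoly.dvd _ _ (Matrix.aeval_self_charpoly M)
  have hdvd3 : minpoly ℂ M ∣ (X - C u) :=
    ((hsq.squarefree_of_dvd hdvd1).dvd_pow_iff_dvd hm).mp hdvd2
  obtain ⟨q, hq⟩ := hdvd3
  have haev : (Polynomial.aeval M) (X - C u) = 0 := by
    rw [hq, _root_.map_mul, minpoly.aeval, zero_mul]
  rw [map_sub, aeval_X, aeval_C, sub_eq_zero] at haev
  rw [haev, Algebra.algebraMap_eq_smul_one]

section FDRepAux

variable {H : Type} [Group H] [Fintype H]

private lemma fdRep_char_eq_trace (V : FDRep ℂ H) (g : H)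
    (b : Module.Basis (Fin (Module.finrank ℂ V)) ℂ V) :
    V.character g = Matrix.trace (LinearMap.toMatrix b b (V.ρ g)) := by
  rw [FDRep.character, LinearMap.trace_eq_matrix_trace ℂ b]

private lemma fdRep_matrix_pow (V : FDRep ℂ H) (g : H)
    (b : Module.Basis (Fin (Module.finrank ℂ V)) ℂ V) :
    (LinearMap.toMatrix b b (V.ρ g)) ^ (Fintype.card H) = 1 := by
  have h1 : (LinearMap.toMatrixAlgEquiv b) (V.ρ g) = LinearMap.toMatrix b b (V.ρ g) := rfl
  rw [← h1, ← map_pow, ← map_pow, ← map_one (LinearMap.toMatrixAlgEquiv b)]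
  congr 1
  rw [pow_card_eq_one]
  exact _root_.map_one V.ρ

private lemma fdRep_abs_char_le (V : FDRep ℂ H) (g : H) :
    ‖(V.character g)‖ ≤ Module.finrank ℂ V := by
  have b := Module.finBasis ℂ V
  rw [fdRep_char_eq_trace V g b]
  exact matrix_abs_trace_le Fintype.card_ne_zero _ (fdRep_matrix_pow V g b)

private lemma fdRep_rho_scalar (V : FDRep ℂ H) (g : H) (hd : Module.finrank ℂ V ≠ 0)
    (h : ‖(V.character g)‖ = Module.finrank ℂ V) :
    V.ρ g = (V.character g / (Module.finrank ℂ V : ℂ)) • 1 := by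
  have b := Module.finBasis ℂ V
  have hM := matrix_scalar_of_abs_trace Fintype.card_ne_zero hd
    (LinearMap.toMatrix b b (V.ρ g)) (fdRep_matrix_pow V g b)
    (by rw [← fdRep_char_eq_trace V g b]; exact h)
  rw [← fdRep_char_eq_trace V g b] at hM
  apply (LinearMap.toMatrixAlgEquiv b).injective
  rw [_root_.map_smul, _root_.map_one]
  exact hM

end FDRepAux

private lemma fin_each_eq {ι : Type*} (s : Finset ι) (g : ι → ℝ) (M : ℝ)
    (h : ∀ i ∈ s, g i ≤ M) (hs : ∑ i ∈ s, g i = s.card * M) : ∀ i ∈ s, g i = M := by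
  by_contra hcon
  push_neg at hcon
  obtain ⟨i0, hi0, hne⟩ := hcon
  have hlt : g i0 < M := lt_of_le_of_ne (h i0 hi0) hne
  have : ∑ i ∈ s, g i < ∑ i ∈ s, M :=
    Finset.sum_lt_sum (fun i hi => h i hi) ⟨i0, hi0, hlt⟩
  rw [Finset.sum_const, nsmul_eq_mul] at this
  linarith [hs ▸ this]

private lemma fin_aligned {ι : Type*} (s : Finset ι) (f : ι → ℂ)
    (h : ‖(∑ i ∈ s, f i)‖ = ∑ i ∈ s, ‖(f i)‖)
    (hne : (∑ i ∈ s, f i) ≠ 0) :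
    ∀ i ∈ s, f i = (‖(f i)‖ : ℂ) *
      ((∑ j ∈ s, f j) / (‖(∑ j ∈ s, f j)‖ : ℂ)) := by
  set T := ∑ j ∈ s, f j with hT
  have hTabs : ‖T‖ ≠ 0 := by simpa using hne
  set u : ℂ := T / (‖T‖ : ℂ) with hu
  have huabs : ‖u‖ = 1 := by rw [hu, norm_div]; simp [hTabs]
  have hTu : (T * (starRingEnd ℂ) u).re = ‖T‖ := by
    have e0 : T * (starRingEnd ℂ) u = (Complex.normSq T : ℂ) / (‖T‖ : ℂ) := by
      rw [hu, map_div₀, div_eq_mul_inv, ← mul_assoc, Complex.mul_conj]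
      simp
      exact (div_eq_mul_inv _ _).symm
    rw [e0, show ((Complex.normSq T : ℂ)/(‖T‖ : ℂ))
        = ((Complex.normSq T / ‖T‖ : ℝ) : ℂ) by push_cast; ring]
    rw [Complex.ofReal_re, Complex.normSq_eq_norm_sq, sq, mul_div_assoc, div_self hTabs, mul_one]
  have hterm : ∀ i ∈ s, (f i * (starRingEnd ℂ) u).re ≤ ‖(f i)‖ := by
    intro i _
    calc (f i * (starRingEnd ℂ) u).re ≤ ‖(f i * (starRingEnd ℂ) u)‖ :=
          Complex.re_le_norm _
      _ = ‖(f i)‖ := by rw [norm_mul]; simp [huabs]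
  have hsum : ∑ i ∈ s, (‖(f i)‖ - (f i * (starRingEnd ℂ) u).re) = 0 := by
    rw [Finset.sum_sub_distrib]
    have : ∑ i ∈ s, (f i * (starRingEnd ℂ) u).re = (T * (starRingEnd ℂ) u).re := by
      rw [← Complex.re_sum]
      congr 1
      rw [← Finset.sum_mul]
    rw [this, hTu, ← h]
    ring
  have hzero := (Finset.sum_eq_zero_iff_of_nonneg
    (fun i hi => by linarith [hterm i hi])).mp hsum
  intro i hi
  have h1 : (f i * (starRingEnd ℂ) u).re = ‖(f i)‖ := by
    have := hzero i hi; linarith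
  have h2 : ‖(f i * (starRingEnd ℂ) u)‖ = ‖(f i)‖ := by
    rw [norm_mul]; simp [huabs]
  have h3 : f i * (starRingEnd ℂ) u = (‖(f i)‖ : ℂ) := by
    have := re_eq_abs_imp (w := f i * (starRingEnd ℂ) u) (by rw [h1, h2])
    rw [h2] at this
    exact this
  have hcu : (starRingEnd ℂ) u * u = 1 := by
    rw [mul_comm, Complex.mul_conj, Complex.normSq_eq_norm_sq, huabs]
    simp
  calc f i = f i * ((starRingEnd ℂ) u * u) := by rw [hcu, mul_one]
    _ = (‖(f i)‖ : ℂ) * u := by rw [← mul_assoc, h3]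

private lemma normal_eq_bot_of_inf_center_eq_bot {H : Type*} [Group H] (hn : Group.IsNilpotent H)
    (K : Subgroup H) (hK : K.Normal) (h : K ⊓ Subgroup.center H = ⊥) : K = ⊥ := by
  have key : ∀ i : ℕ, K ⊓ Subgroup.upperCentralSeries H i = ⊥ := by
    intro i
    induction i with
    | zero => rw [upperCentralSeries_zero, inf_bot_eq]
    | succ n ih =>
      rw [eq_bot_iff]
      intro x hx
      rw [Subgroup.mem_inf] at hx
      obtain ⟨hxK, hxU⟩ := hx
      have hcomm : ∀ y : H, x * y * x⁻¹ * y⁻¹ = 1 := by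
        intro y
        have h1 : x * y * x⁻¹ * y⁻¹ ∈ Subgroup.upperCentralSeries H n :=
          mem_upperCentralSeries_succ_iff.mp hxU y
        have h2 : x * y * x⁻¹ * y⁻¹ ∈ K := by
          have : x * (y * x⁻¹ * y⁻¹) ∈ K := by
            apply K.mul_mem hxK
            have := hK.conj_mem x⁻¹ (K.inv_mem hxK) y
            simpa [mul_assoc] using this
          simpa [mul_assoc] using this
        have : x * y * x⁻¹ * y⁻¹ ∈ K ⊓ Subgroup.upperCentralSeries H n := ⟨h2, h1⟩
        rw [ih] at this
        simpa using this
      have hxc : x ∈ Subgroup.center H := by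
        rw [Subgroup.mem_center_iff]
        intro g
        have h3 := hcomm g
        have : x * g = (x * g * x⁻¹ * g⁻¹) * (g * x) := by group
        rw [h3, one_mul] at this
        exact this.symm
      have : x ∈ K ⊓ Subgroup.center H := ⟨hxK, hxc⟩
      rw [h] at this
      simpa using this
  obtain ⟨n, hn'⟩ := hn.nilpotent'
  rw [← key n, hn', inf_top_eq]

end AuxLemmas

theorem stmt_13 [Group G] [Fintype G] (N : Subgroup G) (hN : N.Normal) (ψ : ↥N → ℂ)
    (hψ : IsIrrChar ↥N ψ) (Z : Subgroup G) (hZ : (Z : Set G) = centSet (indChar N ψ))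
    (hZN : Z ≤ N) [inst : (Z.subgroupOf N).Normal]
    (hnil : Group.IsNilpotent (↥N ⧸ Z.subgroupOf N))
    (hirr : ∀ L : Subgroup G, L.Normal → L ≤ N →
      (((⁅L, L⁆ : Subgroup G)) : Set G) ⊆ kerSet (indChar N ψ) → L ≤ Z) :
    ∀ a ∈ N, ∀ b ∈ N, a⁻¹ * b⁻¹ * a * b ∈ Z := by
  classical
  obtain ⟨W, hWsimple, hWchar⟩ := hψ
  set χ : G → ℂ := indChar N ψ with hχdef
  -- χ is a class function
  have hCF : ∀ t u : G, χ (t * u * t⁻¹) = χ u := by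
    intro t u
    show (Nat.card ↥N : ℂ)⁻¹ * _ = (Nat.card ↥N : ℂ)⁻¹ * _
    congr 1
    apply Fintype.sum_equiv (Equiv.mulRight t)
    intro x
    simp only [Equiv.coe_mulRight]
    congr 1
    group
  -- membership in Z
  have hmem : ∀ z : G, z ∈ Z ↔ (‖(χ z)‖ : ℂ) = χ 1 := by
    intro z
    rw [← SetLike.mem_coe, hZ]
    rfl
  have hψ_ext : ∀ (x : G) (hx : x ∈ N), extZero N ψ x = W.character ⟨x, hx⟩ := by
    intro x hx
    rw [extZero, dif_pos hx, ← hWchar]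
  -- goal reformulation helper
  have hsum_form : ∀ g : G, χ g = (Nat.card ↥N : ℂ)⁻¹ * ∑ x : G, extZero N ψ (x * g * x⁻¹) :=
    fun g => rfl
  by_cases hd0 : Module.finrank ℂ W = 0
  · -- degenerate case : ψ = 0
    have hsub : Subsingleton W := by
      rw [← Module.finrank_zero_iff (R := ℂ)]
      exact hd0
    have hψ0 : ∀ x : G, extZero N ψ x = 0 := by
      intro x
      by_cases hx : x ∈ N
      · rw [extZero, dif_pos hx, ← hWchar]
        show LinearMap.trace ℂ W (W.ρ ⟨x, hx⟩) = 0
        have hz : W.ρ ⟨x, hx⟩ = (0 : W →ₗ[ℂ] W) := Subsingleton.elim _ _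
        rw [hz, _root_.map_zero]
      · rw [extZero, dif_neg hx]
    have hχ0 : ∀ g : G, χ g = 0 := by
      intro g
      rw [hsum_form]
      simp [hψ0]
    have hNZ : N ≤ Z := by
      apply hirr N hN le_rfl
      intro x _
      show χ x = χ 1
      rw [hχ0, hχ0]
    intro a ha b hb
    exact hNZ (N.mul_mem (N.mul_mem (N.mul_mem (N.inv_mem ha) (N.inv_mem hb)) ha) hb)
  · -- main case
    set d : ℕ := Module.finrank ℂ W with hd
    set cN : ℂ := (Nat.card ↥N : ℂ)⁻¹ with hcN
    have hNpos : 0 < Nat.card ↥N := Nat.card_pos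
    have hcNR : ((Nat.card ↥N : ℝ))⁻¹ ≠ 0 := by
      apply inv_ne_zero
      exact_mod_cast hNpos.ne'
    have hχ1 : χ 1 = cN * (Fintype.card G : ℂ) * (d : ℂ) := by
      rw [hsum_form]
      have h1t : ∀ x : G, extZero N ψ (x * 1 * x⁻¹) = (d:ℂ) := by
        intro x
        rw [show x * 1 * x⁻¹ = 1 by group, hψ_ext 1 N.one_mem]
        have h1 : (⟨1, N.one_mem⟩ : ↥N) = 1 := rfl
        rw [h1, FDRep.char_one]
      rw [Finset.sum_congr rfl (fun x _ => h1t x), Finset.sum_const, Finset.card_univ,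
        nsmul_eq_mul]
      ring
    have hdC : ((d:ℕ):ℂ) ≠ 0 := Nat.cast_ne_zero.mpr hd0
    have hGC : ((Fintype.card G : ℕ):ℂ) ≠ 0 := Nat.cast_ne_zero.mpr Fintype.card_ne_zero
    have hcNne : cN ≠ 0 := by
      rw [hcN]
      exact inv_ne_zero (Nat.cast_ne_zero.mpr hNpos.ne')
    have hχ1ne : χ 1 ≠ 0 := by
      rw [hχ1]
      exact mul_ne_zero (mul_ne_zero hcNne hGC) hdC
    have hχ1real : χ 1 = (((Nat.card ↥N : ℝ)⁻¹ * (Fintype.card G : ℝ) * (d:ℝ) : ℝ) : ℂ) := by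
      rw [hχ1, hcN]; push_cast; ring
    set ζf : G → ℂ := fun w => χ w / χ 1 with hζf
    have hζconj : ∀ (z t : G), ζf (t * z * t⁻¹) = ζf z := by
      intro z t
      show χ (t * z * t⁻¹) / χ 1 = χ z / χ 1
      rw [hCF]
    have hZconj : ∀ z ∈ Z, ∀ t : G, t * z * t⁻¹ ∈ Z := by
      intro z hz t
      rw [hmem] at hz ⊢
      rw [hCF]; exact hz
    have hscalar : ∀ z, z ∈ Z → ∀ (x : G) (hxm : x * z * x⁻¹ ∈ N),
        W.ρ ⟨x * z * x⁻¹, hxm⟩ = ζf z • 1 := by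
      intro z hz
      have hzN : z ∈ N := hZN hz
      set f : G → ℂ := fun x => W.character ⟨x * z * x⁻¹, hN.conj_mem z hzN x⟩ with hf
      have hχz : χ z = cN * ∑ x : G, f x := by
        rw [hsum_form]
        congr 1
        apply Finset.sum_congr rfl
        intro x _
        exact hψ_ext _ _
      have habs0 : (‖(χ z)‖ : ℂ) = χ 1 := (hmem z).mp hz
      have habsR : ‖(χ z)‖ = (Nat.card ↥N : ℝ)⁻¹ * (Fintype.card G : ℝ) * (d:ℝ) := by
        have h2 := habs0.trans hχ1real
        exact_mod_cast h2
      have habsz : ‖(χ z)‖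
          = (Nat.card ↥N : ℝ)⁻¹ * ‖(∑ x : G, f x)‖ := by
        rw [hχz, norm_mul, hcN, norm_inv, Complex.norm_natCast]
      have hS : ‖(∑ x : G, f x)‖ = (Fintype.card G : ℝ) * (d:ℝ) := by
        apply mul_left_cancel₀ hcNR
        rw [← habsz, habsR, mul_assoc]
      have hbound : ∀ x : G, ‖(f x)‖ ≤ (d:ℝ) := fun x => fdRep_abs_char_le W _
      have hsum_le : ∑ x : G, ‖(f x)‖ ≤ (Fintype.card G : ℝ) * (d:ℝ) := by
        calc ∑ x : G, ‖(f x)‖ ≤ ∑ _x : G, (d:ℝ) :=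
              Finset.sum_le_sum (fun i _ => hbound i)
          _ = _ := by rw [Finset.sum_const, Finset.card_univ, nsmul_eq_mul]
      have habs_le : ‖(∑ x : G, f x)‖ ≤ ∑ x : G, ‖(f x)‖ :=
        norm_sum_le _ _
      have hsum_eq : ∑ x : G, ‖(f x)‖ = (Fintype.card G : ℝ) * (d:ℝ) :=
        le_antisymm hsum_le (by rw [← hS]; exact habs_le)
      have heach : ∀ x : G, ‖(f x)‖ = (d:ℝ) := by
        intro x
        exact fin_each_eq Finset.univ (fun x => ‖(f x)‖) (d:ℝ)
          (fun i _ => hbound i) (by rw [hsum_eq, Finset.card_univ]) x (Finset.mem_univ x)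
      have hGdne : ((Fintype.card G : ℝ)) * (d:ℝ) ≠ 0 := by
        apply mul_ne_zero
        · exact_mod_cast Fintype.card_ne_zero
        · exact_mod_cast hd0
      have hSne : (∑ x : G, f x) ≠ 0 := by
        intro h0
        rw [h0] at hS
        simp only [norm_zero] at hS
        exact hGdne hS.symm
      have haligned : ∀ x : G,
          f x = (d : ℂ) * ((∑ y : G, f y) / (‖(∑ y : G, f y)‖ : ℂ)) := by
        intro x
        have h3 := fin_aligned Finset.univ f (by rw [hS, hsum_eq]) hSne x (Finset.mem_univ x)
        rw [h3, heach x]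
        norm_cast
      have huζ : (∑ y : G, f y) / (‖(∑ y : G, f y)‖ : ℂ) = ζf z := by
        have hsum2 : (∑ x : G, f x)
            = (Fintype.card G : ℂ)
              * ((d:ℂ) * ((∑ y : G, f y) / (‖(∑ y : G, f y)‖ : ℂ))) := by
          calc (∑ x : G, f x)
              = ∑ _x : G, ((d:ℂ) * ((∑ y : G, f y) / (‖(∑ y : G, f y)‖ : ℂ))) :=
                Finset.sum_congr rfl (fun x _ => haligned x)
            _ = _ := by rw [Finset.sum_const, Finset.card_univ, nsmul_eq_mul]
        have hprod_ne : cN * (Fintype.card G : ℂ) * (d:ℂ) ≠ 0 := by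
          rw [← hχ1]; exact hχ1ne
        show _ = χ z / χ 1
        rw [hχz, hχ1]
        conv_rhs => rw [hsum2]
        rw [show cN * ((Fintype.card G : ℂ)
            * ((d:ℂ) * ((∑ y : G, f y) / (‖(∑ y : G, f y)‖ : ℂ))))
            = ((∑ y : G, f y) / (‖(∑ y : G, f y)‖ : ℂ))
              * (cN * (Fintype.card G : ℂ) * (d:ℂ)) from by ring,
          mul_div_assoc, div_self hprod_ne, mul_one]
      intro x hxm
      have hchar_eq : W.character ⟨x * z * x⁻¹, hxm⟩ = f x := rfl
      have hrho := fdRep_rho_scalar W ⟨x * z * x⁻¹, hxm⟩ hd0 (by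
        rw [hchar_eq, heach x])
      rw [hrho]
      congr 1
      rw [hchar_eq, haligned x, mul_comm, mul_div_assoc, div_self hdC, mul_one]
      exact huζ
    -- multiplicativity of the central character on Z
    have hζmul : ∀ z ∈ Z, ∀ w ∈ Z, ζf (z * w) = ζf z * ζf w := by
      intro z hz w hw
      have hzN := hZN hz
      have hwN := hZN hw
      have hterm : ∀ x : G, extZero N ψ (x * (z * w) * x⁻¹) = (ζf z * ζf w) * (d : ℂ) := by
        intro x
        have hm : x * (z * w) * x⁻¹ ∈ N := hN.conj_mem _ (N.mul_mem hzN hwN) x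
        have hmz : x * z * x⁻¹ ∈ N := hN.conj_mem _ hzN x
        have hmw : x * w * x⁻¹ ∈ N := hN.conj_mem _ hwN x
        rw [hψ_ext _ hm]
        have hsplit : (⟨x * (z * w) * x⁻¹, hm⟩ : ↥N) = ⟨x * z * x⁻¹, hmz⟩ * ⟨x * w * x⁻¹, hmw⟩ := by
          apply Subtype.ext
          show x * (z * w) * x⁻¹ = (x * z * x⁻¹) * (x * w * x⁻¹)
          group
        rw [hsplit, FDRep.character, _root_.map_mul, hscalar z hz x hmz, hscalar w hw x hmw,
          smul_mul_assoc, one_mul, smul_smul, _root_.map_smul, LinearMap.trace_one, smul_eq_mul]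
      have hzw : χ (z * w) = (ζf z * ζf w) * χ 1 := by
        rw [hsum_form, Finset.sum_congr rfl (fun x _ => hterm x), Finset.sum_const,
          Finset.card_univ, nsmul_eq_mul, hχ1]
        ring
      show χ (z * w) / χ 1 = _
      rw [hzw, mul_div_assoc, div_self hχ1ne, mul_one]
    have hrpos : 0 < (Nat.card ↥N : ℝ)⁻¹ * (Fintype.card G : ℝ) * (d : ℝ) := by
      have h1 : (0:ℝ) < Nat.card ↥N := by exact_mod_cast hNpos
      have h2 : (0:ℝ) < Fintype.card G := by exact_mod_cast Fintype.card_pos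
      have h3 : (0:ℝ) < (d:ℝ) := by
        have := Nat.pos_of_ne_zero hd0
        exact_mod_cast this
      positivity
    have hζabs : ∀ z ∈ Z, ‖(ζf z)‖ = 1 := by
      intro z hz
      have habsχ1 : ‖(χ 1)‖
          = (Nat.card ↥N : ℝ)⁻¹ * (Fintype.card G : ℝ) * (d:ℝ) := by
        rw [hχ1real, Complex.norm_real, Real.norm_eq_abs, abs_of_nonneg hrpos.le]
      have habsz : ‖(χ z)‖
          = (Nat.card ↥N : ℝ)⁻¹ * (Fintype.card G : ℝ) * (d:ℝ) := by
        have h4 := ((hmem z).mp hz).trans hχ1real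
        exact_mod_cast h4
      show ‖(χ z / χ 1)‖ = 1
      rw [norm_div, habsz, habsχ1, div_self hrpos.ne']
    have hζne : ∀ z ∈ Z, ζf z ≠ 0 := by
      intro z hz h0
      have := hζabs z hz
      rw [h0] at this
      simp at this
    have hζone : ζf 1 = 1 := div_self hχ1ne
    have hζinv : ∀ z ∈ Z, ζf z⁻¹ = (ζf z)⁻¹ := by
      intro z hz
      have h1 := hζmul z hz z⁻¹ (Z.inv_mem hz)
      rw [show z * z⁻¹ = 1 by group, hζone] at h1
      exact eq_inv_of_mul_eq_one_right h1.symm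
    have hker : ∀ w, w ∈ Z → ζf w = 1 → w ∈ kerSet χ := by
      intro w _ hw1
      show χ w = χ 1
      exact (div_eq_one_iff_eq hχ1ne).mp hw1
    -- the preimage of the centre of N/Z, as a subgroup of G
    obtain ⟨C, hCmem⟩ : ∃ C : Subgroup G,
        ∀ g : G, g ∈ C ↔ (g ∈ N ∧ ∀ n ∈ N, g * n * g⁻¹ * n⁻¹ ∈ Z) := by
      refine ⟨{ carrier := {g : G | g ∈ N ∧ ∀ n ∈ N, g * n * g⁻¹ * n⁻¹ ∈ Z}
                one_mem' := by
                  simp only [Set.mem_setOf_eq]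
                  exact ⟨N.one_mem, fun n hn => by
                    rw [show (1:G) * n * 1⁻¹ * n⁻¹ = 1 by group]; exact Z.one_mem⟩
                mul_mem' := by
                  intro a b ha hb
                  simp only [Set.mem_setOf_eq] at ha hb ⊢
                  obtain ⟨haN, ha⟩ := ha
                  obtain ⟨hbN, hb⟩ := hb
                  refine ⟨N.mul_mem haN hbN, fun n hn => ?_⟩
                  rw [show (a*b)*n*(a*b)⁻¹*n⁻¹
                      = (a * (b*n*b⁻¹*n⁻¹) * a⁻¹) * (a*n*a⁻¹*n⁻¹) by group]
                  exact Z.mul_mem (hZconj _ (hb n hn) a) (ha n hn)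
                inv_mem' := by
                  intro a ha
                  simp only [Set.mem_setOf_eq] at ha ⊢
                  obtain ⟨haN, ha⟩ := ha
                  refine ⟨N.inv_mem haN, fun n hn => ?_⟩
                  rw [show a⁻¹*n*a⁻¹⁻¹*n⁻¹ = a⁻¹ * ((a*n*a⁻¹*n⁻¹)⁻¹) * a⁻¹⁻¹ by group]
                  exact hZconj _ (Z.inv_mem (ha n hn)) a⁻¹ }, fun g => Iff.rfl⟩
    have hCnormal : C.Normal := by
      constructor
      intro g hg t
      rw [hCmem] at hg ⊢
      obtain ⟨hgN, hgc⟩ := hg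
      refine ⟨hN.conj_mem g hgN t, fun n hn => ?_⟩
      have hn' : t⁻¹ * n * t ∈ N := by
        have := hN.conj_mem n hn t⁻¹
        simpa using this
      rw [show (t*g*t⁻¹)*n*(t*g*t⁻¹)⁻¹*n⁻¹
          = t * (g * (t⁻¹*n*t) * g⁻¹ * (t⁻¹*n*t)⁻¹) * t⁻¹ by group]
      exact hZconj _ (hgc _ hn') t
    have hCleN : C ≤ N := fun g hg => ((hCmem g).mp hg).1
    have hbrZ : ∀ v, v ∈ C → ∀ x ∈ N, x * v * x⁻¹ * v⁻¹ ∈ Z := by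
      intro v hv x hx
      have h1 := ((hCmem v).mp hv).2 x hx
      have h2 := Z.inv_mem h1
      rw [show (v*x*v⁻¹*x⁻¹)⁻¹ = x*v*x⁻¹*v⁻¹ by group] at h2
      exact h2
    have hlam_mul : ∀ v, v ∈ C → ∀ x ∈ N, ∀ y ∈ N,
        ζf ((x*y)*v*(x*y)⁻¹*v⁻¹) = ζf (x*v*x⁻¹*v⁻¹) * ζf (y*v*y⁻¹*v⁻¹) := by
      intro v hv x hx y hy
      rw [show (x*y)*v*(x*y)⁻¹*v⁻¹ = (x * (y*v*y⁻¹*v⁻¹) * x⁻¹) * (x*v*x⁻¹*v⁻¹) by group]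
      rw [hζmul _ (hZconj _ (hbrZ v hv y hy) x) _ (hbrZ v hv x hx), hζconj]
      ring
    have hlam_inv : ∀ v, v ∈ C → ∀ x ∈ N,
        ζf (x⁻¹*v*x⁻¹⁻¹*v⁻¹) = (ζf (x*v*x⁻¹*v⁻¹))⁻¹ := by
      intro v hv x hx
      have h1 := hlam_mul v hv x hx x⁻¹ (N.inv_mem hx)
      rw [show (x*x⁻¹)*v*(x*x⁻¹)⁻¹*v⁻¹ = (1:G) by group, hζone] at h1
      exact eq_inv_of_mul_eq_one_right h1.symm
    haveI hNn : N.Normal := hN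
    have hDlam : ∀ v, v ∈ C → ∀ u, u ∈ (⁅N, N⁆ : Subgroup G) →
        ζf (u*v*u⁻¹*v⁻¹) = 1 := by
      intro v hv
      obtain ⟨Hv, hHv⟩ : ∃ Hv : Subgroup G,
          ∀ g : G, g ∈ Hv ↔ (g ∈ N ∧ ζf (g*v*g⁻¹*v⁻¹) = 1) := by
        refine ⟨{ carrier := {g : G | g ∈ N ∧ ζf (g*v*g⁻¹*v⁻¹) = 1}
                  one_mem' := by
                    simp only [Set.mem_setOf_eq]
                    refine ⟨N.one_mem, ?_⟩
                    rw [show (1:G)*v*1⁻¹*v⁻¹ = 1 by group, hζone]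
                  mul_mem' := by
                    intro a b ha hb
                    simp only [Set.mem_setOf_eq] at ha hb ⊢
                    obtain ⟨haN, ha⟩ := ha
                    obtain ⟨hbN, hb⟩ := hb
                    refine ⟨N.mul_mem haN hbN, ?_⟩
                    rw [hlam_mul v hv a haN b hbN, ha, hb, mul_one]
                  inv_mem' := by
                    intro a ha
                    simp only [Set.mem_setOf_eq] at ha ⊢
                    obtain ⟨haN, ha⟩ := ha
                    refine ⟨N.inv_mem haN, ?_⟩
                    rw [hlam_inv v hv a haN, ha, inv_one] }, fun g => Iff.rfl⟩
      have hle : (⁅N, N⁆ : Subgroup G) ≤ Hv := by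
        rw [Subgroup.commutator_le]
        intro g1 hg1 g2 hg2
        rw [hHv]
        have hgm : g1*g2*g1⁻¹ ∈ N := N.mul_mem (N.mul_mem hg1 hg2) (N.inv_mem hg1)
        constructor
        · rw [commutatorElement_def]
          exact N.mul_mem hgm (N.inv_mem hg2)
        · rw [commutatorElement_def]
          have e1 := hlam_mul v hv (g1*g2*g1⁻¹) hgm g2⁻¹ (N.inv_mem hg2)
          have e2 := hlam_mul v hv (g1*g2) (N.mul_mem hg1 hg2) g1⁻¹ (N.inv_mem hg1)
          have e3 := hlam_mul v hv g1 hg1 g2 hg2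
          have e4 := hlam_inv v hv g1 hg1
          have e5 := hlam_inv v hv g2 hg2
          rw [e1, e2, e3, e4, e5]
          have n1 : ζf (g1*v*g1⁻¹*v⁻¹) ≠ 0 := hζne _ (hbrZ v hv g1 hg1)
          have n2 : ζf (g2*v*g2⁻¹*v⁻¹) ≠ 0 := hζne _ (hbrZ v hv g2 hg2)
          have habfin : ∀ (A B : ℂ), A ≠ 0 → B ≠ 0 → A * B * A⁻¹ * B⁻¹ = 1 := by
            intro A B hA hB
            field_simp
          exact habfin _ _ n1 n2
      intro u hu
      exact ((hHv u).mp (hle hu)).2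
    obtain ⟨Ksub, hKmem⟩ : ∃ K : Subgroup G, ∀ g : G, g ∈ K ↔ (g ∈ Z ∧ ζf g = 1) := by
      refine ⟨{ carrier := {g : G | g ∈ Z ∧ ζf g = 1}
                one_mem' := by
                  simp only [Set.mem_setOf_eq]
                  exact ⟨Z.one_mem, hζone⟩
                mul_mem' := by
                  intro a b ha hb
                  simp only [Set.mem_setOf_eq] at ha hb ⊢
                  obtain ⟨haZ, ha⟩ := ha
                  obtain ⟨hbZ, hb⟩ := hb
                  exact ⟨Z.mul_mem haZ hbZ, by rw [hζmul a haZ b hbZ, ha, hb, mul_one]⟩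
                inv_mem' := by
                  intro a ha
                  simp only [Set.mem_setOf_eq] at ha ⊢
                  obtain ⟨haZ, ha⟩ := ha
                  exact ⟨Z.inv_mem haZ, by rw [hζinv a haZ, ha, inv_one]⟩ }, fun g => Iff.rfl⟩
    set L0 : Subgroup G := (⁅N, N⁆ : Subgroup G) ⊓ C with hL0
    have hL0normal : L0.Normal := by
      have h1 : (⁅N, N⁆ : Subgroup G).Normal := Subgroup.commutator_normal N N
      constructor
      intro g hg t
      rw [hL0, Subgroup.mem_inf] at hg ⊢
      exact ⟨h1.conj_mem _ hg.1 t, hCnormal.conj_mem _ hg.2 t⟩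
    have hL0le : L0 ≤ N := fun g hg => hCleN (Subgroup.mem_inf.mp hg).2
    have hL0Z : L0 ≤ Z := by
      apply hirr L0 hL0normal hL0le
      intro w hw
      have hw' : w ∈ (⁅L0, L0⁆ : Subgroup G) := hw
      have hle : (⁅L0, L0⁆ : Subgroup G) ≤ Ksub := by
        rw [Subgroup.commutator_le]
        intro u hu v hv
        rw [Subgroup.mem_inf] at hu hv
        rw [hKmem, commutatorElement_def]
        exact ⟨hbrZ v hv.2 u (hCleN hu.2), hDlam v hv.2 u hu.1⟩
      have hwk := hle hw'
      rw [hKmem] at hwk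
      exact hker w hwk.1 hwk.2
    -- pass to the quotient N/Z
    set π : ↥N →* (↥N ⧸ Z.subgroupOf N) := QuotientGroup.mk' (Z.subgroupOf N) with hπ
    have hπker : π.ker = Z.subgroupOf N := QuotientGroup.ker_mk' _
    have hπsurj : Function.Surjective π := QuotientGroup.mk'_surjective _
    have hmapcomm : (⁅(⊤ : Subgroup ↥N), (⊤ : Subgroup ↥N)⁆ : Subgroup ↥N).map π
        = ⁅(⊤ : Subgroup (↥N ⧸ Z.subgroupOf N)), (⊤ : Subgroup (↥N ⧸ Z.subgroupOf N))⁆ := by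
      rw [Subgroup.map_commutator, Subgroup.map_top_of_surjective _ hπsurj]
    have hQder_bot :
        (⁅(⊤ : Subgroup (↥N ⧸ Z.subgroupOf N)), (⊤ : Subgroup (↥N ⧸ Z.subgroupOf N))⁆
          : Subgroup (↥N ⧸ Z.subgroupOf N)) = ⊥ := by
      apply normal_eq_bot_of_inf_center_eq_bot hnil _ (Subgroup.commutator_normal ⊤ ⊤)
      rw [eq_bot_iff]
      intro q hq
      rw [Subgroup.mem_inf] at hq
      obtain ⟨hq1, hq2⟩ := hq
      rw [← hmapcomm, Subgroup.mem_map] at hq1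
      obtain ⟨w, hw, rfl⟩ := hq1
      have hwD : (w : G) ∈ (⁅N, N⁆ : Subgroup G) := by
        have h2 : Subgroup.map N.subtype (⁅(⊤:Subgroup ↥N), (⊤:Subgroup ↥N)⁆)
            = (⁅N, N⁆ : Subgroup G) := by
          rw [Subgroup.map_commutator]
          congr 1 <;>
          · rw [← MonoidHom.range_eq_map, Subgroup.range_subtype]
        rw [← h2]
        exact Subgroup.mem_map_of_mem _ hw
      have hwC : (w : G) ∈ C := by
        rw [hCmem]
        refine ⟨w.2, fun n hn => ?_⟩
        have hc := Subgroup.mem_center_iff.mp hq2 (π ⟨n, hn⟩)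
        have hcomm : π (w * ⟨n, hn⟩ * w⁻¹ * ⟨n, hn⟩⁻¹) = 1 := by
          rw [_root_.map_mul, _root_.map_mul, _root_.map_mul, _root_.map_inv, _root_.map_inv,
            ← hc]
          group
        have hkerw : w * ⟨n, hn⟩ * w⁻¹ * ⟨n, hn⟩⁻¹ ∈ Z.subgroupOf N := by
          rw [← hπker]; exact hcomm
        rw [Subgroup.mem_subgroupOf] at hkerw
        simpa using hkerw
      have hwL0 : (w:G) ∈ L0 := by
        rw [hL0, Subgroup.mem_inf]
        exact ⟨hwD, hwC⟩
      have hwZ : w ∈ Z.subgroupOf N := Subgroup.mem_subgroupOf.mpr (hL0Z hwL0)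
      show π w ∈ (⊥ : Subgroup _)
      rw [Subgroup.mem_bot, ← MonoidHom.mem_ker, hπker]
      exact hwZ
    intro a ha b hb
    have hmemcomm : (⟨a, ha⟩⁻¹ * ⟨b, hb⟩⁻¹ * ⟨a, ha⟩ * ⟨b, hb⟩ : ↥N)
        ∈ (⁅(⊤:Subgroup ↥N), (⊤:Subgroup ↥N)⁆ : Subgroup ↥N) := by
      have h4 := Subgroup.commutator_mem_commutator
        (Subgroup.mem_top ((⟨a, ha⟩ : ↥N)⁻¹)) (Subgroup.mem_top ((⟨b, hb⟩ : ↥N)⁻¹))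
      rw [commutatorElement_def] at h4
      simpa [inv_inv] using h4
    have h1 : π (⟨a, ha⟩⁻¹ * ⟨b, hb⟩⁻¹ * ⟨a, ha⟩ * ⟨b, hb⟩) = 1 := by
      have h2 : π (⟨a, ha⟩⁻¹ * ⟨b, hb⟩⁻¹ * ⟨a, ha⟩ * ⟨b, hb⟩)
          ∈ Subgroup.map π (⁅(⊤:Subgroup ↥N), (⊤:Subgroup ↥N)⁆ : Subgroup ↥N) :=
        Subgroup.mem_map_of_mem _ hmemcomm
      rw [hmapcomm, hQder_bot, Subgroup.mem_bot] at h2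
      exact h2
    have h3 : (⟨a, ha⟩⁻¹ * ⟨b, hb⟩⁻¹ * ⟨a, ha⟩ * ⟨b, hb⟩ : ↥N) ∈ Z.subgroupOf N := by
      rw [← hπker]; exact h1
    rw [Subgroup.mem_subgroupOf] at h3
    simpa using h3



end
end
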